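/- arXiv:1505.00235 — 9 statements merged into one kernel-verified Lean document; each statement's English description precedes it below -/
import Mathlib

section
/- For all sufficiently large n, every I₃-free digraph on {0,…,n−1} is a bitournament or belongs to A(n) ∪ B(n) ∪ C(n); that is, F(n) ⊆ T(n) ∪ A(n) ∪ B(n) ∪ C(n). -/
open scoped Classical

/-- `E` is a digraph relation on `Fin n`: irreflexive and asymmetric. -/
def DigraphOn (n : ℕ) (E : Fin n → Fin n → Bool) : Prop :=
  (∀ x, E x x = false) ∧ ∀ x y, E x y = true → E y x = false

/-- `E` is I₃-free: any three distinct vertices span at least one arrow. -/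
def I3FreeOn (n : ℕ) (E : Fin n → Fin n → Bool) : Prop :=
  ∀ x y z : Fin n, x ≠ y → y ≠ z → x ≠ z →
    E x y = true ∨ E y x = true ∨ E y z = true ∨ E z y = true ∨
    E x z = true ∨ E z x = true

/-- The set `S` induces a tournament in `E`. -/
def IndTournOn (n : ℕ) (E : Fin n → Fin n → Bool) (S : Finset (Fin n)) : Prop :=
  ∀ x ∈ S, ∀ y ∈ S, x ≠ y → E x y = true ∨ E y x = true

/-- `E` is a bitournament: a digraph whose vertex set splits into two tournaments. -/
def BitournOn (n : ℕ) (E : Fin n → Fin n → Bool) : Prop :=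
  DigraphOn n E ∧ ∃ S : Finset (Fin n), IndTournOn n E S ∧ IndTournOn n E Sᶜ

/-- The set of I₃-free digraphs on `{0, …, n-1}`. -/
noncomputable def Fset (n : ℕ) : Finset (Fin n → Fin n → Bool) :=
  Finset.univ.filter fun E => DigraphOn n E ∧ I3FreeOn n E

/-- The set of bitournaments on `{0, …, n-1}`. -/
noncomputable def Tset (n : ℕ) : Finset (Fin n → Fin n → Bool) :=
  Finset.univ.filter fun E => BitournOn n E

/-- `x ≁ y` : distinct, unrelated vertices. -/
def NadjOn (n : ℕ) (E : Fin n → Fin n → Bool) (x y : Fin n) : Prop :=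
  x ≠ y ∧ E x y = false ∧ E y x = false

/-- `Δ(v)`, the set of vertices non-adjacent to `v`. -/
noncomputable def DeltaOn (n : ℕ) (E : Fin n → Fin n → Bool) (v : Fin n) : Finset (Fin n) :=
  Finset.univ.filter fun x => NadjOn n E x v

/-- `Δ(Q) = (⋃_{v ∈ Q} Δ(v)) \ Q`. -/
noncomputable def DeltaSetOn (n : ℕ) (E : Fin n → Fin n → Bool) (Q : Finset (Fin n)) :
    Finset (Fin n) :=
  (Q.biUnion (DeltaOn n E)) \ Q

/-- `A(n)`: I₃-free digraphs with a vertex `v` with `|Δ(v)| ≤ ⌊log₂ n⌋`. -/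
noncomputable def Aset (n : ℕ) : Finset (Fin n → Fin n → Bool) :=
  (Fset n).filter fun E => ∃ v : Fin n, (DeltaOn n E v).card ≤ Nat.log 2 n

/-- `B(n)`. -/
noncomputable def Bset (n : ℕ) : Finset (Fin n → Fin n → Bool) :=
  ((Fset n) \ (Aset n)).filter fun E =>
    ∃ v : Fin n, ∃ Q ⊆ DeltaOn n E v, Q.card = Nat.log 2 n ∧
      ((DeltaSetOn n E Q).card : ℝ) ≤ (1 / 2 - 1 / 10 ^ 6) * n

/-- `C(n)`. -/
noncomputable def Cset (n : ℕ) : Finset (Fin n → Fin n → Bool) :=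
  ((Fset n) \ (Aset n ∪ Bset n)).filter fun E =>
    ∃ x y : Fin n, x ≠ y ∧ NadjOn n E x y ∧
      ∃ Qx ⊆ DeltaOn n E x, ∃ Qy ⊆ DeltaOn n E y,
        Qx.card = Nat.log 2 n ∧ Qy.card = Nat.log 2 n ∧
        (n : ℝ) / 100 ≤ ((DeltaSetOn n E Qx ∩ DeltaSetOn n E Qy).card : ℝ)

/-!
For each vertex `v` choose `Q v ⊆ Δ(v)` with `⌊log₂ n⌋` elements and put `D v = Δ(Q v)`.
Outside `A ∪ B ∪ C` every `D v` has more than `(1/2 - 10⁻⁶) n` elements and non-adjacent vertices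
have almost disjoint `D`-sets, so in the Hamming distance `|X ∆ Y|` the set `D x` is close to the
complement of `D y` whenever `x ≁ y`. Each `a ∈ D v` is joined to `v` by a path `a ≁ q ≁ v`,
hence `D a` is close to `D v`. Fixing a vertex `v₀`, the vertices whose `D`-set meets `D v₀` have
`D`-sets close to `D v₀`, the others have `D`-sets close to its complement, and neither class
contains a non-adjacent pair.
-/

open Finset
open scoped symmDiff

section HammingDistance

variable {α : Type*} [DecidableEq α]

theorem Finset.card_symmDiff_add_two_mul_card_inter (s t : Finset α) :
    #(s ∆ t) + 2 * #(s ∩ t) = #s + #t := by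
  have h : #(s ∆ t) + #(s ∩ t) = #(s ∪ t) := by
    rw [symmDiff_eq_sup_sdiff_inf]
    exact card_sdiff_add_card_eq_card inter_subset_union
  have := card_union_add_card_inter s t
  omega

theorem Finset.card_symmDiff_le_add (s t u : Finset α) :
    #(s ∆ t) ≤ #(s ∆ u) + #(t ∆ u) := by
  rw [symmDiff_comm t]
  exact (card_le_card (symmDiff_triangle s u t)).trans (card_union_le _ _)

theorem Finset.card_symmDiff_compl_add_card_symmDiff [Fintype α] (s t : Finset α) :
    #(s ∆ tᶜ) + #(s ∆ t) = Fintype.card α := by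
  have : s ∆ tᶜ = (s ∆ t)ᶜ := by ext; simp only [mem_compl, mem_symmDiff]; tauto
  rw [this, card_compl_add_card]

theorem Finset.card_symmDiff_compl_lt [Fintype α] {s t : Finset α} {ε δ : ℝ}
    (hs : (1 / 2 - ε) * Fintype.card α < #s) (ht : (1 / 2 - ε) * Fintype.card α < #t)
    (hst : #(s ∩ t) ≤ δ * Fintype.card α) :
    #(s ∆ tᶜ) < 2 * (ε + δ) * Fintype.card α := by
  have h₁ : (#(s ∆ tᶜ) : ℝ) + #(s ∆ t) = Fintype.card α := by
    exact_mod_cast card_symmDiff_compl_add_card_symmDiff s t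
  have h₂ : (#(s ∆ t) : ℝ) + 2 * #(s ∩ t) = #s + #t := by
    exact_mod_cast card_symmDiff_add_two_mul_card_inter s t
  linarith

end HammingDistance

section Bipartition

variable {V : Type*} [Fintype V] [DecidableEq V] {R : V → V → Prop} {D : V → Finset V}
  {ε δ : ℝ}

theorem card_symmDiff_lt_of_mem
    (hD : ∀ v, (1 / 2 - ε) * Fintype.card V < #(D v))
    (hR : ∀ u v, R u v → #(D u ∩ D v) < δ * Fintype.card V)
    (hpath : ∀ v, ∀ a ∈ D v, ∃ q, R a q ∧ R q v) {v a : V} (ha : a ∈ D v) :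
    #(D v ∆ D a) < 4 * (ε + δ) * Fintype.card V := by
  obtain ⟨q, haq, hqv⟩ := hpath v a ha
  have h₁ := card_symmDiff_compl_lt (hD a) (hD q) (hR a q haq).le
  have h₂ := card_symmDiff_compl_lt (hD v) (hD q) (inter_comm (D v) (D q) ▸ (hR q v hqv).le)
  have h₃ : (#(D v ∆ D a) : ℝ) ≤ #(D v ∆ (D q)ᶜ) + #(D a ∆ (D q)ᶜ) := by
    exact_mod_cast card_symmDiff_le_add _ _ _
  linarith

theorem card_symmDiff_lt_of_not_disjoint
    (hD : ∀ v, (1 / 2 - ε) * Fintype.card V < #(D v))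
    (hR : ∀ u v, R u v → #(D u ∩ D v) < δ * Fintype.card V)
    (hpath : ∀ v, ∀ a ∈ D v, ∃ q, R a q ∧ R q v) {x y : V} (hxy : ¬Disjoint (D x) (D y)) :
    #(D x ∆ D y) < 8 * (ε + δ) * Fintype.card V := by
  obtain ⟨a, hax, hay⟩ := not_disjoint_iff.mp hxy
  have h₁ := card_symmDiff_lt_of_mem hD hR hpath hax
  have h₂ := card_symmDiff_lt_of_mem hD hR hpath hay
  have h₃ : (#(D x ∆ D y) : ℝ) ≤ #(D x ∆ D a) + #(D y ∆ D a) := by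
    exact_mod_cast card_symmDiff_le_add _ _ _
  linarith

theorem lt_card_symmDiff_of_rel
    (hD : ∀ v, (1 / 2 - ε) * Fintype.card V < #(D v))
    (hR : ∀ u v, R u v → #(D u ∩ D v) < δ * Fintype.card V) {x y : V} (hxy : R x y) :
    (1 - 2 * (ε + δ)) * Fintype.card V < #(D x ∆ D y) := by
  have h₁ := card_symmDiff_compl_lt (hD x) (hD y) (hR x y hxy).le
  have h₂ : (#(D x ∆ (D y)ᶜ) : ℝ) + #(D x ∆ D y) = Fintype.card V := by
    exact_mod_cast card_symmDiff_compl_add_card_symmDiff (D x) (D y)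
  linarith

theorem exists_bipartition_of_card_inter_lt
    (hD : ∀ v, (1 / 2 - ε) * Fintype.card V < #(D v))
    (hR : ∀ u v, R u v → #(D u ∩ D v) < δ * Fintype.card V)
    (hpath : ∀ v, ∀ a ∈ D v, ∃ q, R a q ∧ R q v) (hεδ : 18 * (ε + δ) ≤ 1) :
    ∃ S : Finset V, (∀ x ∈ S, ∀ y ∈ S, ¬R x y) ∧ ∀ x ∉ S, ∀ y ∉ S, ¬R x y := by
  rcases isEmpty_or_nonempty V with _ | ⟨⟨v₀⟩⟩
  · exact ⟨∅, by simp, fun x => isEmptyElim x⟩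
  have hn : 0 ≤ (1 - 18 * (ε + δ)) * Fintype.card V :=
    mul_nonneg (by linarith) (Nat.cast_nonneg _)
  refine ⟨univ.filter fun v => ¬Disjoint (D v) (D v₀), ?_, ?_⟩
  · intro x hx y hy hxy
    have hx₀ := card_symmDiff_lt_of_not_disjoint hD hR hpath (mem_filter.mp hx).2
    have hy₀ := card_symmDiff_lt_of_not_disjoint hD hR hpath (mem_filter.mp hy).2
    have h : (#(D x ∆ D y) : ℝ) ≤ #(D x ∆ D v₀) + #(D y ∆ D v₀) := by
      exact_mod_cast card_symmDiff_le_add _ _ _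
    linarith [lt_card_symmDiff_of_rel hD hR hxy]
  · intro x hx y hy hxy
    have hdisj : ∀ z ∉ univ.filter fun v => ¬Disjoint (D v) (D v₀),
        #(D z ∆ (D v₀)ᶜ) < 2 * ε * Fintype.card V := fun z hz => by
      have hz₀ : D z ∩ D v₀ = ∅ := disjoint_iff_inter_eq_empty.mp (by simpa using hz)
      simpa using card_symmDiff_compl_lt (δ := 0) (hD z) (hD v₀) (by simp [hz₀])
    have hx₀ := hdisj x hx
    have hy₀ := hdisj y hy
    have h : (#(D x ∆ D y) : ℝ) ≤ #(D x ∆ (D v₀)ᶜ) + #(D y ∆ (D v₀)ᶜ) := by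
      exact_mod_cast card_symmDiff_le_add _ _ _
    have hδ : (0 : ℝ) < δ * Fintype.card V := (Nat.cast_nonneg _).trans_lt (hR x y hxy)
    have hε : (0 : ℝ) < ε * Fintype.card V := by
      linarith [(Nat.cast_nonneg _ : (0 : ℝ) ≤ #(D x ∆ (D v₀)ᶜ))]
    linarith [lt_card_symmDiff_of_rel hD hR hxy]

end Bipartition

section Bitournament

variable {n : ℕ} {E : Fin n → Fin n → Bool}

theorem exists_nadjOn_nadjOn_of_mem_deltaSetOn {v a : Fin n} {Q : Finset (Fin n)}
    (hQ : Q ⊆ DeltaOn n E v) (ha : a ∈ DeltaSetOn n E Q) :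
    ∃ q, NadjOn n E a q ∧ NadjOn n E q v := by
  obtain ⟨q, hq, haq⟩ := mem_biUnion.mp (mem_sdiff.mp ha).1
  exact ⟨q, (mem_filter.mp haq).2, (mem_filter.mp (hQ hq)).2⟩

theorem indTournOn_of_forall_not_nadjOn {S : Finset (Fin n)}
    (h : ∀ x ∈ S, ∀ y ∈ S, ¬NadjOn n E x y) : IndTournOn n E S := by
  intro x hx y hy hxy
  by_contra! hxy'
  simp only [ne_eq, Bool.not_eq_true] at hxy'
  exact h x hx y hy ⟨hxy, hxy'⟩

theorem bitournOn_of_forall_lt (hE : DigraphOn n E)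
    (hA : ∀ v, Nat.log 2 n < #(DeltaOn n E v))
    (hB : ∀ v, ∀ Q ⊆ DeltaOn n E v, #Q = Nat.log 2 n →
      (1 / 2 - 1 / 10 ^ 6 : ℝ) * n < #(DeltaSetOn n E Q))
    (hC : ∀ x y, NadjOn n E x y → ∀ Qx ⊆ DeltaOn n E x, ∀ Qy ⊆ DeltaOn n E y,
      #Qx = Nat.log 2 n → #Qy = Nat.log 2 n →
      #(DeltaSetOn n E Qx ∩ DeltaSetOn n E Qy) < (n : ℝ) / 100) :
    BitournOn n E := by
  choose Q hQ hQcard using fun v => exists_subset_card_eq (hA v).le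
  have hD : ∀ v, (1 / 2 - 1 / 10 ^ 6 : ℝ) * Fintype.card (Fin n) < #(DeltaSetOn n E (Q v)) :=
    fun v => by simpa only [Fintype.card_fin] using hB v (Q v) (hQ v) (hQcard v)
  have hR : ∀ x y, NadjOn n E x y → #(DeltaSetOn n E (Q x) ∩ DeltaSetOn n E (Q y)) <
      (1 / 100 : ℝ) * Fintype.card (Fin n) := fun x y hxy => by
    simpa [div_eq_inv_mul] using hC x y hxy (Q x) (hQ x) (Q y) (hQ y) (hQcard x) (hQcard y)
  obtain ⟨S, hS, hSc⟩ := exists_bipartition_of_card_inter_lt hD hR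
    (fun v a ha => exists_nadjOn_nadjOn_of_mem_deltaSetOn (hQ v) ha) (by norm_num)
  refine ⟨hE, S, indTournOn_of_forall_not_nadjOn hS,
    indTournOn_of_forall_not_nadjOn fun x hx y hy => hSc x (mem_compl.mp hx) y (mem_compl.mp hy)⟩

end Bitournament

/-- For sufficiently large `n`, `F(n) ⊆ T(n) ∪ A(n) ∪ B(n) ∪ C(n)`. -/
theorem Fset_subset_Tset_union_ABC :
    ∃ N : ℕ, ∀ n : ℕ, N ≤ n → Fset n ⊆ Tset n ∪ Aset n ∪ Bset n ∪ Cset n := by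
  refine ⟨0, fun n _ E hE => ?_⟩
  by_contra! h
  simp only [mem_union, not_or] at h
  obtain ⟨⟨⟨hT, hA⟩, hB⟩, hC⟩ := h
  have hA' : ∀ v, Nat.log 2 n < #(DeltaOn n E v) := by simpa [Aset, hE] using hA
  have hB' : ∀ v, ∀ Q ⊆ DeltaOn n E v, #Q = Nat.log 2 n →
      (1 / 2 - 1 / 10 ^ 6 : ℝ) * n < #(DeltaSetOn n E Q) := by
    simpa [Bset, hE, hA] using hB
  have hC' : ∀ x y, NadjOn n E x y → ∀ Qx ⊆ DeltaOn n E x, ∀ Qy ⊆ DeltaOn n E y,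
      #Qx = Nat.log 2 n → #Qy = Nat.log 2 n →
      #(DeltaSetOn n E Qx ∩ DeltaSetOn n E Qy) < (n : ℝ) / 100 := by
    simp only [Cset, ne_eq, mem_filter, mem_sdiff, hE, mem_union, hA, hB, or_self,
      not_false_eq_true, and_self, true_and, not_exists, not_and, not_le] at hC
    exact fun x y hxy => hC x y hxy.1 hxy
  exact hT <| mem_filter.mpr ⟨mem_univ _, bitournOn_of_forall_lt (mem_filter.mp hE).2.1 hA' hB' hC'⟩
end

section
/- For every n, |T(n+1)| ≥ 6^{n/2}·|T(n)| (as an inequality of real numbers), where T(n) is the set of bitournaments on {0,…,n−1}. -/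
open scoped Classical

/-! Every bitournament `E` on `n` vertices, with tournament sides `S` and `Sᶜ`, extends to a
bitournament on `n + 1` vertices by adding a vertex to the side `S`: it must be joined to each
vertex of `S` (two choices) and may be joined or not to each vertex of `Sᶜ` (three choices), giving
`2 ^ |S| * 3 ^ (n - |S|)` distinct extensions. Adding it to `Sᶜ` instead gives
`2 ^ (n - |S|) * 3 ^ |S|`. The product of these counts is `6 ^ n`, so the larger one is at least
`6 ^ (n / 2)`, and every bitournament on `n` vertices is the restriction of that many
bitournaments on `n + 1` vertices. -/

open Finset in
lemma card_filter_forall_ne_none {α β : Type*} [Fintype α] [Fintype β] (T : Finset α) :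
    #{d : α → Option β | ∀ a ∈ T, d a ≠ none}
      = Fintype.card β ^ #T * (Fintype.card β + 1) ^ (Fintype.card α - #T) := by
  have hpi : ({d : α → Option β | ∀ a ∈ T, d a ≠ none} : Finset _)
      = Fintype.piFinset fun a => if a ∈ T then univ.erase none else univ := by
    ext d
    simp only [mem_filter, mem_univ, true_and, Fintype.mem_piFinset]
    refine forall_congr' fun a => ?_
    split_ifs <;> simp [*]
  rw [hpi, Fintype.card_piFinset]
  simp only [apply_ite card, prod_ite, prod_const, card_erase_of_mem (mem_univ _), card_univ,
    Fintype.card_option, filter_mem_eq_inter, univ_inter, filter_not, card_sdiff, inter_univ,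
    Nat.add_sub_cancel]

lemma le_max_of_mul_self_le_mul {r x y : ℝ} (hx : 0 ≤ x) (hy : 0 ≤ y) (h : r * r ≤ x * y) :
    r ≤ max x y := by
  by_contra! hr
  have := mul_lt_mul'' ((le_max_left x y).trans_lt hr) ((le_max_right x y).trans_lt hr) hx hy
  linarith

namespace Bitournament

open Finset

variable {n : ℕ}

def restrict (E : Fin (n + 1) → Fin (n + 1) → Bool) : Fin n → Fin n → Bool :=
  fun i j => E i.castSucc j.castSucc

/-- The new vertex is `Fin.last n`; `d a = none` leaves it unrelated to `a`, `d a = some true`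
adds the arrow `a → last`, and `d a = some false` the arrow `last → a`. -/
def extend (E : Fin n → Fin n → Bool) (d : Fin n → Option Bool) :
    Fin (n + 1) → Fin (n + 1) → Bool :=
  Fin.lastCases (Fin.lastCases false fun b => d b == some false)
    fun a => Fin.lastCases (d a == some true) (E a)

section extend

variable (E : Fin n → Fin n → Bool) (d : Fin n → Option Bool) (a b : Fin n)

@[simp] lemma extend_castSucc_castSucc : extend E d a.castSucc b.castSucc = E a b := by
  simp [extend]

@[simp] lemma extend_castSucc_last : extend E d a.castSucc (Fin.last n) = (d a == some true) := by
  simp [extend]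

@[simp] lemma extend_last_castSucc : extend E d (Fin.last n) a.castSucc = (d a == some false) := by
  simp [extend]

@[simp] lemma extend_last_last : extend E d (Fin.last n) (Fin.last n) = false := by
  simp [extend]

lemma restrict_extend : restrict (extend E d) = E := by
  funext a b
  simp [restrict]

lemma extend_injective : Function.Injective (extend E) := by
  intro d d' h
  funext a
  have hto := congrFun (congrFun h a.castSucc) (Fin.last n)
  have hfrom := congrFun (congrFun h (Fin.last n)) a.castSucc
  simp only [extend_castSucc_last, extend_last_castSucc] at hto hfrom
  revert hto hfrom
  generalize d a = o; generalize d' a = o'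
  decide +revert

end extend

lemma restrict_mem_Tset {E : Fin (n + 1) → Fin (n + 1) → Bool} (hE : E ∈ Tset (n + 1)) :
    restrict E ∈ Tset n := by
  simp only [Tset, mem_filter, mem_univ, true_and] at hE ⊢
  obtain ⟨⟨hirr, hasym⟩, S, hS, hSc⟩ := hE
  have hinj := Fin.castSucc_injective n
  refine ⟨⟨fun x => hirr _, fun x y => hasym _ _⟩, S.preimage Fin.castSucc hinj.injOn, ?_, ?_⟩
  · intro x hx y hy hxy
    rw [mem_preimage] at hx hy
    exact hS _ hx _ hy (hinj.ne hxy)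
  · intro x hx y hy hxy
    simp only [mem_compl, mem_preimage] at hx hy
    exact hSc _ (mem_compl.2 hx) _ (mem_compl.2 hy) (hinj.ne hxy)

lemma extend_mem_Tset {E : Fin n → Fin n → Bool} {T : Finset (Fin n)} {d : Fin n → Option Bool}
    (hE : DigraphOn n E) (hT : IndTournOn n E T) (hTc : IndTournOn n E Tᶜ)
    (hd : ∀ a ∈ T, d a ≠ none) : extend E d ∈ Tset (n + 1) := by
  obtain ⟨hirr, hasym⟩ := hE
  have hdT : ∀ a ∈ T, d a = some true ∨ d a = some false := fun a ha => by
    obtain ⟨b, hb⟩ := Option.ne_none_iff_exists'.1 (hd a ha)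
    cases b <;> simp [hb]
  simp only [Tset, mem_filter, mem_univ, true_and]
  refine ⟨⟨fun x => ?_, fun x y => ?_⟩, insert (Fin.last n) (T.map Fin.castSuccEmb), ?_, ?_⟩
  · cases x using Fin.lastCases <;> simp [hirr]
  · cases x using Fin.lastCases <;> cases y using Fin.lastCases <;> simp
    all_goals grind
  all_goals
    intro x hx y hy hxy
    cases x using Fin.lastCases <;> cases y using Fin.lastCases <;> simp at hx hy hxy ⊢
  · exact (hdT _ hy).symm
  · exact hdT _ hx
  · exact hT _ hx _ hy hxy
  · exact hTc _ (mem_compl.2 hx) _ (mem_compl.2 hy) hxy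

lemma two_pow_mul_three_pow_le_card_fiber {E : Fin n → Fin n → Bool} {T : Finset (Fin n)}
    (hE : DigraphOn n E) (hT : IndTournOn n E T) (hTc : IndTournOn n E Tᶜ) :
    2 ^ #T * 3 ^ (n - #T) ≤ #{F ∈ Tset (n + 1) | restrict F = E} := by
  have hcard := card_filter_forall_ne_none (β := Bool) T
  rw [Fintype.card_bool, Fintype.card_fin] at hcard
  rw [← hcard]
  refine card_le_card_of_injOn (extend E) (fun d hd => ?_) (extend_injective E).injOn
  simp only [coe_filter, mem_univ, true_and, Set.mem_ofPred_eq] at hd ⊢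
  exact ⟨extend_mem_Tset hE hT hTc hd, restrict_extend E d⟩

lemma sqrt_six_pow_le_card_fiber {E : Fin n → Fin n → Bool} (hE : E ∈ Tset n) :
    (6 : ℝ) ^ ((n : ℝ) / 2) ≤ #{F ∈ Tset (n + 1) | restrict F = E} := by
  simp only [Tset, mem_filter, mem_univ, true_and] at hE
  obtain ⟨hD, S, hS, hSc⟩ := hE
  have hS' : #S ≤ n := by simpa using card_le_univ S
  have hfiberS := two_pow_mul_three_pow_le_card_fiber hD hS hSc
  have hfiberSc := two_pow_mul_three_pow_le_card_fiber hD hSc (by rwa [compl_compl])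
  rw [card_compl, Fintype.card_fin, Nat.sub_sub_self hS'] at hfiberSc
  have hprod : (6 : ℝ) ^ ((n : ℝ) / 2) * 6 ^ ((n : ℝ) / 2)
      = ((2 ^ #S * 3 ^ (n - #S) : ℕ) : ℝ) * ((2 ^ (n - #S) * 3 ^ #S : ℕ) : ℝ) := by
    have hsplit (b : ℝ) : b ^ n = b ^ #S * b ^ (n - #S) := by
      rw [← pow_add, Nat.add_sub_cancel' hS']
    rw [← Real.rpow_add (by norm_num), add_halves, Real.rpow_natCast]
    push_cast
    rw [show (6 : ℝ) = 2 * 3 by norm_num, mul_pow, hsplit 2, hsplit 3]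
    ring
  refine (le_max_of_mul_self_le_mul (by positivity) (by positivity) hprod.le).trans ?_
  exact max_le (by exact_mod_cast hfiberS) (by exact_mod_cast hfiberSc)

end Bitournament

/-- `|T(n+1)| ≥ 6^{n/2} · |T(n)|`. -/
theorem Tcard_succ_ge :
    ∀ n : ℕ, (6 : ℝ) ^ ((n : ℝ) / 2) * ((Tset n).card : ℝ) ≤ ((Tset (n + 1)).card : ℝ) := by
  intro n
  have hcount := Finset.mul_card_image_le_card_of_maps_to
    (fun F hF => Bitournament.restrict_mem_Tset hF) ⌈(6 : ℝ) ^ ((n : ℝ) / 2)⌉₊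
    (fun E hE => Nat.ceil_le.2 (Bitournament.sqrt_six_pow_le_card_fiber hE))
  calc (6 : ℝ) ^ ((n : ℝ) / 2) * (Tset n).card
      ≤ ⌈(6 : ℝ) ^ ((n : ℝ) / 2)⌉₊ * (Tset n).card := by gcongr; exact Nat.le_ceil _
    _ ≤ (Tset (n + 1)).card := by exact_mod_cast hcount
end

section
/- For all sufficiently large n, |A(n)| ≤ 2^{n + (log₂ n)² + log₂ n − 1}·|F(n−1)|; equivalently, log₂(|A(n)|/|F(n−1)|) ≤ n + (log₂ n)² + log₂ n − 1. -/
open scoped Classical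

/-!
A digraph in `A(n)` is determined by a vertex `v` with `|Δ(v)| ≤ k = ⌊log₂ n⌋`, the set
`Δ(v)`, the out-arrows of `v`, and the I₃-free digraph left after deleting `v`: for `x ≠ v`
there is an arrow `x → v` exactly when there is no arrow `v → x` and `x ∉ Δ(v)`. Hence
`|A(n)| ≤ n · ∑_{i ≤ k} C(n, i) · 2ⁿ · |F(n-1)|`, and as `2ᵏ ≤ n < 2ᵏ⁺¹`,
`n · ∑_{i ≤ k} C(n, i) ≤ (k + 1) n^(k+1) / k! ≤ 2^(k² + k - 1)`
as soon as `(k + 1) 2^(k+2) ≤ k!`, which holds for `k ≥ 7`.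
-/

open Finset Nat

lemma succ_mul_two_pow_le_factorial {k : ℕ} (hk : 7 ≤ k) : (k + 1) * 2 ^ (k + 2) ≤ k ! := by
  induction k, hk using Nat.le_induction with
  | base => decide
  | succ k hk ih =>
    calc (k + 1 + 1) * 2 ^ (k + 1 + 2) = 2 * (k + 2) * 2 ^ (k + 2) := by ring
      _ ≤ (k + 1) * (k + 1) * 2 ^ (k + 2) := Nat.mul_le_mul_right _ (by nlinarith)
      _ = (k + 1) * ((k + 1) * 2 ^ (k + 2)) := by ring
      _ ≤ (k + 1) * k ! := by gcongr
      _ = (k + 1)! := (Nat.factorial_succ k).symm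

lemma choose_le_choose_of_le_half_left {n i j : ℕ} (hij : i ≤ j) (hj : j ≤ n / 2) :
    n.choose i ≤ n.choose j := by
  induction hij using Nat.decreasingInduction with
  | self => rfl
  | of_succ l hl ih => exact (Nat.choose_le_succ_of_lt_half_left (hl.trans_le hj)).trans ih

lemma sum_range_choose_mul_factorial_le {n k : ℕ} (hk : k ≤ n / 2) :
    (∑ i ∈ range (k + 1), n.choose i) * k ! ≤ (k + 1) * n ^ k := by
  have hsum : ∑ i ∈ range (k + 1), n.choose i ≤ (k + 1) * n.choose k := by
    simpa using Finset.sum_le_card_nsmul _ _ _ fun i hi =>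
      choose_le_choose_of_le_half_left (Nat.lt_succ_iff.mp (mem_range.mp hi)) hk
  calc (∑ i ∈ range (k + 1), n.choose i) * k ! ≤ (k + 1) * (n.choose k * k !) := by
        rw [← mul_assoc]; gcongr
    _ ≤ (k + 1) * n ^ k := by
        gcongr
        rw [mul_comm, ← Nat.descFactorial_eq_factorial_mul_choose]
        exact Nat.descFactorial_le_pow n k

lemma two_mul_mul_sum_range_choose_log_le {n : ℕ} (hn : 2 ^ 7 ≤ n) :
    2 * (n * ∑ i ∈ range (Nat.log 2 n + 1), n.choose i) ≤
      2 ^ (Nat.log 2 n ^ 2 + Nat.log 2 n) := by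
  set k := Nat.log 2 n
  have hk : 7 ≤ k := Nat.le_log_of_pow_le (by norm_num) hn
  have hlow : 2 ^ k ≤ n := Nat.pow_log_le_self 2 (by omega)
  have hup : n < 2 ^ (k + 1) := Nat.lt_pow_succ_log_self (by norm_num) n
  have hhalf : k ≤ n / 2 := by
    have hpred : k - 1 < 2 ^ (k - 1) := Nat.lt_two_pow_self
    have hpow : 2 ^ k = 2 * 2 ^ (k - 1) := by rw [← pow_succ']; congr 1; omega
    omega
  refine Nat.le_of_mul_le_mul_right ?_ (Nat.factorial_pos k)
  calc 2 * (n * ∑ i ∈ range (k + 1), n.choose i) * k !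
      = 2 * n * ((∑ i ∈ range (k + 1), n.choose i) * k !) := by ring
    _ ≤ 2 * n * ((k + 1) * n ^ k) :=
        Nat.mul_le_mul_left _ (sum_range_choose_mul_factorial_le hhalf)
    _ = 2 * ((k + 1) * n ^ (k + 1)) := by ring
    _ ≤ 2 * ((k + 1) * (2 ^ (k + 1)) ^ (k + 1)) := by gcongr
    _ = (k + 1) * 2 ^ (k + 2) * 2 ^ (k ^ 2 + k) := by ring
    _ ≤ k ! * 2 ^ (k ^ 2 + k) := Nat.mul_le_mul_right _ (succ_mul_two_pow_le_factorial hk)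
    _ = 2 ^ (k ^ 2 + k) * k ! := mul_comm _ _

def deleteVertex {m : ℕ} (v : Fin (m + 1)) (E : Fin (m + 1) → Fin (m + 1) → Bool) :
    Fin m → Fin m → Bool :=
  fun i j => E (v.succAbove i) (v.succAbove j)

lemma deleteVertex_mem_Fset {m : ℕ} {E : Fin (m + 1) → Fin (m + 1) → Bool}
    (hE : E ∈ Fset (m + 1)) (v : Fin (m + 1)) : deleteVertex v E ∈ Fset m := by
  obtain ⟨⟨hirr, hasymm⟩, hI3⟩ := (mem_filter.mp hE).2
  have hinj := Fin.succAbove_right_injective (p := v)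
  refine mem_filter.mpr ⟨mem_univ _, ⟨fun i => hirr _, fun i j => hasymm _ _⟩, ?_⟩
  intro i j l hij hjl hil
  exact hI3 _ _ _ (hinj.ne hij) (hinj.ne hjl) (hinj.ne hil)

lemma mem_DeltaOn {n : ℕ} {E : Fin n → Fin n → Bool} {x v : Fin n} :
    x ∈ DeltaOn n E v ↔ NadjOn n E x v := by
  simp [DeltaOn]

lemma DigraphOn.apply_eq_of_ne {n : ℕ} {E : Fin n → Fin n → Bool} (hE : DigraphOn n E)
    {x v : Fin n} (hxv : x ≠ v) : E x v = (!E v x && decide (x ∉ DeltaOn n E v)) := by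
  cases hvx : E v x
  · cases hxv' : E x v <;> simp [mem_DeltaOn, NadjOn, hxv, hvx, hxv']
  · simp [hE.2 v x hvx]

lemma DigraphOn.eq_of_deleteVertex_eq {m : ℕ} {E₁ E₂ : Fin (m + 1) → Fin (m + 1) → Bool}
    (h₁ : DigraphOn (m + 1) E₁) (h₂ : DigraphOn (m + 1) E₂) {v : Fin (m + 1)}
    (hrow : E₁ v = E₂ v) (hΔ : DeltaOn (m + 1) E₁ v = DeltaOn (m + 1) E₂ v)
    (hdel : deleteVertex v E₁ = deleteVertex v E₂) : E₁ = E₂ := by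
  funext x y
  by_cases hx : x = v
  · subst hx; exact congrFun hrow y
  by_cases hy : y = v
  · subst hy; rw [h₁.apply_eq_of_ne hx, h₂.apply_eq_of_ne hx, hΔ, congrFun hrow x]
  obtain ⟨i, rfl⟩ := Fin.exists_succAbove_eq hx
  obtain ⟨j, rfl⟩ := Fin.exists_succAbove_eq hy
  exact congrFun (congrFun hdel i) j

lemma card_filter_card_DeltaOn_le {m : ℕ} (k : ℕ) (v : Fin (m + 1)) :
    #{E ∈ Fset (m + 1) | #(DeltaOn (m + 1) E v) ≤ k} ≤
      (∑ i ∈ range (k + 1), (m + 1).choose i) * 2 ^ (m + 1) * #(Fset m) := by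
  set smallSets := (range (k + 1)).biUnion fun i => powersetCard i (univ : Finset (Fin (m + 1)))
  have hsmall : #smallSets ≤ ∑ i ∈ range (k + 1), (m + 1).choose i := by
    refine card_biUnion_le.trans (sum_le_sum fun i _ => ?_)
    simp
  calc #{E ∈ Fset (m + 1) | #(DeltaOn (m + 1) E v) ≤ k}
      ≤ #(smallSets ×ˢ (univ : Finset (Fin (m + 1) → Bool)) ×ˢ Fset m) := by
        refine card_le_card_of_injOn (fun E => (DeltaOn (m + 1) E v, E v, deleteVertex v E))
          (fun E hE => ?_) (fun E₁ hE₁ E₂ hE₂ heq => ?_)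
        · obtain ⟨hF, hk⟩ := mem_filter.mp hE
          simp only [coe_product, Set.mem_prod, mem_coe, mem_univ, true_and, smallSets,
            mem_biUnion, mem_range, mem_powersetCard, subset_univ]
          exact ⟨⟨_, Nat.lt_succ_of_le hk, rfl⟩, deleteVertex_mem_Fset hF v⟩
        · simp only [Prod.mk.injEq] at heq
          exact DigraphOn.eq_of_deleteVertex_eq (mem_filter.mp (mem_filter.mp hE₁).1).2.1
            (mem_filter.mp (mem_filter.mp hE₂).1).2.1 heq.2.1 heq.1 heq.2.2
    _ = #smallSets * 2 ^ (m + 1) * #(Fset m) := by simp [card_product, mul_assoc]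
    _ ≤ _ := by gcongr

lemma card_filter_exists_card_DeltaOn_le (m k : ℕ) :
    #{E ∈ Fset (m + 1) | ∃ v, #(DeltaOn (m + 1) E v) ≤ k} ≤
      (m + 1) * ((∑ i ∈ range (k + 1), (m + 1).choose i) * 2 ^ (m + 1) * #(Fset m)) := by
  calc #{E ∈ Fset (m + 1) | ∃ v, #(DeltaOn (m + 1) E v) ≤ k}
      ≤ #(univ.biUnion fun v => {E ∈ Fset (m + 1) | #(DeltaOn (m + 1) E v) ≤ k}) := by
        refine card_le_card fun E hE => ?_
        obtain ⟨hF, v, hv⟩ := mem_filter.mp hE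
        exact mem_biUnion.mpr ⟨v, mem_univ v, mem_filter.mpr ⟨hF, hv⟩⟩
    _ ≤ ∑ v : Fin (m + 1), #{E ∈ Fset (m + 1) | #(DeltaOn (m + 1) E v) ≤ k} :=
        card_biUnion_le
    _ ≤ _ := by simpa using sum_le_sum fun v (_ : v ∈ univ) => card_filter_card_DeltaOn_le k v

/-- For sufficiently large `n`,
`|A(n)| ≤ 2^(n + (log₂ n)² + log₂ n − 1) · |F(n−1)|`. -/
theorem Acard_le :
    ∃ N : ℕ, ∀ n : ℕ, N ≤ n →
      ((Aset n).card : ℝ) ≤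
        (2 : ℝ) ^ ((n : ℝ) + (Nat.log 2 n : ℝ) ^ 2 + (Nat.log 2 n : ℝ) - 1) *
          ((Fset (n - 1)).card : ℝ) := by
  refine ⟨2 ^ 7, fun n hn => ?_⟩
  obtain ⟨m, rfl⟩ : ∃ m, n = m + 1 := ⟨n - 1, by omega⟩
  set k := Nat.log 2 (m + 1)
  have hnat : 2 * #(Aset (m + 1)) ≤ 2 ^ (m + 1 + k ^ 2 + k) * #(Fset m) :=
    calc 2 * #(Aset (m + 1))
        ≤ 2 * ((m + 1) * ((∑ i ∈ range (k + 1), (m + 1).choose i) * 2 ^ (m + 1) * #(Fset m))) :=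
          Nat.mul_le_mul_left 2 (card_filter_exists_card_DeltaOn_le m k)
      _ = 2 * ((m + 1) * ∑ i ∈ range (k + 1), (m + 1).choose i) * 2 ^ (m + 1) * #(Fset m) := by
          ring
      _ ≤ 2 ^ (k ^ 2 + k) * 2 ^ (m + 1) * #(Fset m) := by
          gcongr; exact two_mul_mul_sum_range_choose_log_le hn
      _ = 2 ^ (m + 1 + k ^ 2 + k) * #(Fset m) := by ring
  have hexp :
      (2 : ℝ) ^ (((m + 1 : ℕ) : ℝ) + (k : ℝ) ^ 2 + k - 1) = 2 ^ (m + 1 + k ^ 2 + k) / 2 := by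
    rw [Real.rpow_sub two_pos, Real.rpow_one]
    norm_cast
  rw [Nat.add_sub_cancel, hexp, div_mul_eq_mul_div, le_div_iff₀ two_pos, mul_comm]
  exact_mod_cast hnat
end

section
/- Let α = log₂ 3 and β = (1+α)/2 + (1−α)/10⁶. For all sufficiently large n, |B(n)| ≤ 2^{β·n·log₂ n + n + (3/2)(log₂ n)² − (1/2)·log₂ n}·|F(n − ⌊log₂ n⌋)|. -/
open scoped Classical

/-!
Let `k = ⌊log₂ n⌋`, let `Q ⊆ Δ(v)` have `k` elements and put `D = Δ(Q)`. Since the digraph is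
I₃-free, `Q` spans a tournament, and every `y ∉ Q ∪ D` is adjacent to every `x ∈ Q`. Hence the
digraph is determined by its restriction to `Qᶜ`, an I₃-free digraph on `n - k` vertices, together
with the pairs `(E x y, E y x)` for `x ∈ Q`, which take at most three values when `y ∈ D` and at
most two otherwise. For `|D| ≤ (1/2 - 10⁻⁶) n` this leaves at most
`(3^|D| 2^(n-|D|))^k |F(n-k)| ≤ 2^(βnk) |F(n-k)|` digraphs for each pair `(Q, D)`, and there are at
most `C(n, k) 2ⁿ ≤ 2^(k(k+1)+n)` such pairs, which fits the claimed bound once `k ≥ 3`.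
-/

open Finset

local notation "α" => Real.logb 2 3
local notation "β" => (1 + α) / 2 + (1 - α) / 10 ^ 6

section Digraph

variable {n : ℕ} {E : Fin n → Fin n → Bool}

@[simp]
lemma mem_Fset : E ∈ Fset n ↔ DigraphOn n E ∧ I3FreeOn n E := by
  unfold Fset; simp

@[simp]
lemma mem_deltaOn {v x : Fin n} : x ∈ DeltaOn n E v ↔ NadjOn n E x v := by
  unfold DeltaOn; simp

lemma I3FreeOn.indTournOn_deltaOn (hE : I3FreeOn n E) (v : Fin n) :
    IndTournOn n E (DeltaOn n E v) := by
  intro x hx y hy hxy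
  obtain ⟨hxv, hxv₁, hxv₂⟩ := mem_deltaOn.1 hx
  obtain ⟨hyv, hyv₁, hyv₂⟩ := mem_deltaOn.1 hy
  simpa [hxv₁, hxv₂, hyv₁, hyv₂] using hE x v y hxv (Ne.symm hyv) hxy

lemma IndTournOn.mono {S T : Finset (Fin n)} (hT : IndTournOn n E T) (hST : S ⊆ T) :
    IndTournOn n E S :=
  fun x hx y hy hxy => hT x (hST hx) y (hST hy) hxy

lemma related_of_notMem_deltaSetOn {Q : Finset (Fin n)} {x y : Fin n} (hx : x ∈ Q) (hy : y ∉ Q)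
    (hyD : y ∉ DeltaSetOn n E Q) : E x y = true ∨ E y x = true := by
  by_contra! h
  simp only [ne_eq, Bool.not_eq_true] at h
  exact hyD <| mem_sdiff.2
    ⟨mem_biUnion.2 ⟨x, hx, mem_deltaOn.2 ⟨fun hyx => hy (hyx ▸ hx), h.2, h.1⟩⟩, hy⟩

lemma restrict_mem_Fset {m : ℕ} {f : Fin m → Fin n} (hf : Function.Injective f)
    (hE : E ∈ Fset n) : (fun i j => E (f i) (f j)) ∈ Fset m := by
  obtain ⟨⟨hirr, hasymm⟩, hI3⟩ := mem_Fset.1 hE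
  exact mem_Fset.2 ⟨⟨fun x => hirr _, fun x y => hasymm _ _⟩,
    fun x y z hxy hyz hxz => hI3 _ _ _ (hf.ne hxy) (hf.ne hyz) (hf.ne hxz)⟩

end Digraph

section Counting

variable {n : ℕ}

def pairCodes (D : Finset (Fin n)) (x y : Fin n) : Finset (Bool × Bool) :=
  univ.filter fun p => ¬(p.1 = true ∧ p.2 = true) ∧ (y ∉ D → (p.1 = true ∨ p.2 = true ↔ y ≠ x))

lemma card_pairCodes_le (D : Finset (Fin n)) (x y : Fin n) :
    #(pairCodes D x y) ≤ if y ∈ D then 3 else 2 := by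
  unfold pairCodes
  by_cases hyD : y ∈ D
  · simp only [hyD, not_true_eq_false, false_imp_iff, and_true, if_true]
    decide
  · simp only [hyD, if_false, not_false_eq_true, true_imp_iff]
    by_cases hyx : y = x
    · simp only [hyx, ne_eq, not_true_eq_false, iff_false]
      decide
    · simp only [hyx, ne_eq, not_false_eq_true, iff_true]
      decide

lemma pair_mem_pairCodes {E : Fin n → Fin n → Bool} (hE : DigraphOn n E) {Q : Finset (Fin n)}
    (hQ : IndTournOn n E Q) {x : Fin n} (hx : x ∈ Q) (y : Fin n) :
    (E x y, E y x) ∈ pairCodes (DeltaSetOn n E Q) x y := by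
  simp only [pairCodes, mem_filter, mem_univ, true_and]
  refine ⟨fun h => by simp [hE.2 x y h.1] at h, fun hyD => ⟨?_, fun hyx => ?_⟩⟩
  · rintro h rfl
    simp [hE.1] at h
  · by_cases hy : y ∈ Q
    · exact hQ x hx y hy (Ne.symm hyx)
    · exact related_of_notMem_deltaSetOn hx hy hyD

lemma prod_card_pairCodes_le (Q D : Finset (Fin n)) :
    ∏ p : Q × Fin n, #(pairCodes D p.1 p.2) ≤ (3 ^ #D * 2 ^ (n - #D)) ^ #Q := by
  calc ∏ p : Q × Fin n, #(pairCodes D p.1 p.2)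
      ≤ ∏ p : Q × Fin n, if p.2 ∈ D then 3 else 2 :=
        prod_le_prod' fun p _ => card_pairCodes_le D p.1 p.2
    _ = (3 ^ #D * 2 ^ (n - #D)) ^ #Q := by
        rw [Fintype.prod_prod_type]
        simp [prod_ite, filter_not, card_sdiff]

noncomputable def deltaClass (n : ℕ) (Q D : Finset (Fin n)) : Finset (Fin n → Fin n → Bool) :=
  (Fset n).filter fun E => DeltaSetOn n E Q = D ∧ IndTournOn n E Q

lemma card_deltaClass_le (Q D : Finset (Fin n)) :
    #(deltaClass n Q D) ≤ (∏ p : Q × Fin n, #(pairCodes D p.1 p.2)) * #(Fset (n - #Q)) := by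
  have hcompl : #Qᶜ = n - #Q := by rw [card_compl, Fintype.card_fin]
  set e := Qᶜ.orderIsoOfFin hcompl
  let encode (E : Fin n → Fin n → Bool) :
      (Q × Fin n → Bool × Bool) × (Fin (n - #Q) → Fin (n - #Q) → Bool) :=
    (fun p => (E p.1 p.2, E p.2 p.1), fun i j => E (e i) (e j))
  calc #(deltaClass n Q D)
      ≤ #(Fintype.piFinset (fun p : Q × Fin n => pairCodes D p.1 p.2) ×ˢ Fset (n - #Q)) := by
        refine card_le_card_of_injOn encode (fun E hE => ?_) fun E₁ _ E₂ _ h => ?_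
        · obtain ⟨hF, rfl, hT⟩ := mem_filter.1 hE
          exact mem_product.2 ⟨Fintype.mem_piFinset.2 fun p =>
            pair_mem_pairCodes (mem_Fset.1 hF).1 hT p.1.2 p.2,
            restrict_mem_Fset (f := fun i => e i) (Subtype.val_injective.comp e.injective) hF⟩
        · obtain ⟨hpair, hrest⟩ := Prod.ext_iff.1 h
          funext x y
          by_cases hx : x ∈ Q
          · exact congrArg Prod.fst (congrFun hpair (⟨x, hx⟩, y))
          by_cases hy : y ∈ Q
          · exact congrArg Prod.snd (congrFun hpair (⟨y, hy⟩, x))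
          simpa [encode] using congrFun (congrFun hrest (e.symm ⟨x, mem_compl.2 hx⟩))
            (e.symm ⟨y, mem_compl.2 hy⟩)
    _ = _ := by rw [card_product, Fintype.card_piFinset]

lemma one_le_logb_two_three : (1 : ℝ) ≤ α := by
  rw [Real.le_logb_iff_rpow_le one_lt_two three_pos]
  norm_num

lemma three_pow_mul_two_pow_eq_rpow {d m : ℕ} (hd : d ≤ m) :
    ((3 ^ d * 2 ^ (m - d) : ℕ) : ℝ) = 2 ^ (m + (α - 1) * d) := by
  have hexp : (m : ℝ) + (α - 1) * d = α * d + (m - d : ℕ) := by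
    push_cast [Nat.cast_sub hd]
    ring
  rw [hexp, Real.rpow_add two_pos, Real.rpow_mul two_pos.le,
    Real.rpow_logb two_pos (by norm_num) three_pos, Real.rpow_natCast, Real.rpow_natCast]
  push_cast
  rfl

lemma card_deltaClass_le_rpow (Q D : Finset (Fin n)) (hD : (#D : ℝ) ≤ (1 / 2 - 1 / 10 ^ 6) * n) :
    (#(deltaClass n Q D) : ℝ) ≤ 2 ^ (β * n * #Q) * #(Fset (n - #Q)) := by
  have hDn : #D ≤ n := by simpa using card_le_univ D
  have hα := one_le_logb_two_three
  have hslack : 0 ≤ (#Q : ℝ) * (α - 1) * ((1 / 2 - 1 / 10 ^ 6) * n - #D) :=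
    mul_nonneg (mul_nonneg (Nat.cast_nonneg _) (by linarith)) (by linarith)
  calc (#(deltaClass n Q D) : ℝ)
      ≤ ((3 ^ #D * 2 ^ (n - #D) : ℕ) : ℝ) ^ #Q * #(Fset (n - #Q)) := by
        exact_mod_cast (card_deltaClass_le Q D).trans
          (Nat.mul_le_mul_right _ (prod_card_pairCodes_le Q D))
    _ = 2 ^ ((n + (α - 1) * #D) * #Q) * #(Fset (n - #Q)) := by
        rw [three_pow_mul_two_pow_eq_rpow hDn, ← Real.rpow_natCast, ← Real.rpow_mul two_pos.le]
    _ ≤ 2 ^ (β * n * #Q) * #(Fset (n - #Q)) := by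
        gcongr 2 ^ ?_ * _
        · norm_num
        · linarith

end Counting

noncomputable def deltaIndex (n : ℕ) : Finset (Finset (Fin n) × Finset (Fin n)) :=
  univ.powersetCard (Nat.log 2 n) ×ˢ univ.filter fun D => (#D : ℝ) ≤ (1 / 2 - 1 / 10 ^ 6) * n

lemma card_deltaIndex_le (n : ℕ) :
    #(deltaIndex n) ≤ 2 ^ (Nat.log 2 n * (Nat.log 2 n + 1) + n) := by
  calc #(deltaIndex n) ≤ n.choose (Nat.log 2 n) * 2 ^ n := by
        rw [deltaIndex, card_product, card_powersetCard, card_univ, Fintype.card_fin]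
        gcongr
        exact (card_filter_le _ _).trans (by simp)
    _ ≤ (2 ^ (Nat.log 2 n + 1)) ^ Nat.log 2 n * 2 ^ n := by
        gcongr
        exact (Nat.choose_le_pow _ _).trans
          (Nat.pow_le_pow_left (Nat.lt_pow_succ_log_self one_lt_two n).le _)
    _ = _ := by rw [← pow_mul, ← pow_add, mul_comm]

lemma Bset_subset_biUnion_deltaClass (n : ℕ) :
    Bset n ⊆ (deltaIndex n).biUnion fun p => deltaClass n p.1 p.2 := by
  intro E hE
  obtain ⟨hEAF, v, Q, hQv, hQ, hD⟩ := mem_filter.1 hE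
  have hEF := (mem_sdiff.1 hEAF).1
  exact mem_biUnion.2 ⟨(Q, DeltaSetOn n E Q),
    mem_product.2 ⟨mem_powersetCard_univ.2 hQ, mem_filter.2 ⟨mem_univ _, hD⟩⟩,
    mem_filter.2 ⟨hEF, rfl, ((mem_Fset.1 hEF).2.indTournOn_deltaOn v).mono hQv⟩⟩

/-- For sufficiently large `n`, with `α = log₂ 3` and `β = (1+α)/2 + (1−α)/10⁶`,
`|B(n)| ≤ 2^(β·n·log₂ n + n + (3/2)(log₂ n)² − (1/2)·log₂ n) · |F(n − ⌊log₂ n⌋)|`. -/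
theorem Bcard_le :
    ∃ N : ℕ, ∀ n : ℕ, N ≤ n →
      ((Bset n).card : ℝ) ≤
        (2 : ℝ) ^ (((1 + Real.logb 2 3) / 2 + (1 - Real.logb 2 3) / 10 ^ 6) *
              (n : ℝ) * (Nat.log 2 n : ℝ) +
            (n : ℝ) + (3 / 2) * (Nat.log 2 n : ℝ) ^ 2 - (1 / 2) * (Nat.log 2 n : ℝ)) *
          ((Fset (n - Nat.log 2 n)).card : ℝ) := by
  refine ⟨8, fun n hn => ?_⟩
  set k := Nat.log 2 n
  have hk : 3 ≤ k := Nat.le_log_of_pow_le one_lt_two hn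
  have hclass : ∀ p ∈ deltaIndex n,
      (#(deltaClass n p.1 p.2) : ℝ) ≤ 2 ^ (β * n * k) * #(Fset (n - k)) := by
    rintro ⟨Q, D⟩ hp
    obtain ⟨hQ, hD⟩ := mem_product.1 hp
    have hQk : #Q = k := mem_powersetCard_univ.1 hQ
    have h := card_deltaClass_le_rpow Q D (mem_filter.1 hD).2
    rwa [hQk] at h
  have hk' : (3 : ℝ) ≤ k := by exact_mod_cast hk
  calc (#(Bset n) : ℝ) ≤ ∑ p ∈ deltaIndex n, (#(deltaClass n p.1 p.2) : ℝ) := by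
        exact_mod_cast (card_le_card (Bset_subset_biUnion_deltaClass n)).trans card_biUnion_le
    _ ≤ #(deltaIndex n) * (2 ^ (β * n * k) * #(Fset (n - k))) := by
        simpa using sum_le_card_nsmul _ _ _ hclass
    _ ≤ 2 ^ ((k * (k + 1) + n : ℕ) : ℝ) * (2 ^ (β * n * k) * #(Fset (n - k))) := by
        gcongr
        rw [Real.rpow_natCast]
        exact_mod_cast card_deltaIndex_le n
    _ = 2 ^ (k * (k + 1) + n + β * n * k) * #(Fset (n - k)) := by
        rw [Real.rpow_add two_pos]
        push_cast
        ring
    _ ≤ _ := by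
        gcongr 2 ^ ?_ * _
        · norm_num
        · nlinarith
end

section
/- Let α = log₂ 3 and γ = 1 + 4/10⁶ + 3/100 + α·(1 − 2/10⁶ − 2/100). For all sufficiently large n, |C(n)| ≤ 2^{γ·n + 2(log₂ n)² + 2·log₂ n}·|F(n−2)|. -/
open scoped Classical

/-!
Fix a witness `(x, y, Q_x, Q_y)` of `Γ ∈ C(n)`, normalised so that `Q_x` and `Q_y` avoid `x` and
`y`, and the restriction `D` of `Γ` to the other `n - 2` vertices, an I₃-free digraph. Then `D`
determines `S_x = Δ(Q_x) \ {x, y}` and `S_y = Δ(Q_y) \ {x, y}`. By I₃-freeness every vertex of `S_x`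
is adjacent to `x` (as `w ≁ q ≁ x` for some `q ∈ Q_x`), every vertex of `S_y` to `y`, and every
vertex other than `x`, `y` to `x` or `y`. So a vertex has `4` choices for its arcs to `x` and `y`
in `S_x ∩ S_y`, `6` in exactly one of `S_x`, `S_y`, and `8` otherwise. Since `Γ ∉ B(n)` gives
`|S_x|, |S_y| ≳ n/2`, and `|S_x ∩ S_y| ≳ n/100`, the product is at most `2^(γn - 2)`; and there are
at most `n² · C(n, log n)² ≤ 2^(2 log² n + 2 log n + 2)` witnesses.
-/

namespace I3Free

open Finset
open scoped Nat

variable {n : ℕ} {Γ : Fin n → Fin n → Bool}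

lemma exists_swap_out {α : Type*} [DecidableEq α] {Q S : Finset α} (hQS : Q ⊆ S) (hlt : #Q < #S)
    (z : α) :
    ∃ Q' c, Q' ⊆ S ∧ #Q' = #Q ∧ z ∉ Q' ∧ Q.erase z ⊆ Q' ∧ Q' ⊆ insert c Q := by
  by_cases hz : z ∈ Q
  · obtain ⟨c, hcS, hcQ⟩ := exists_mem_notMem_of_card_lt_card hlt
    refine ⟨insert c (Q.erase z), c, insert_subset hcS ((erase_subset _ _).trans hQS), ?_, ?_,
      subset_insert _ _, insert_subset_insert _ (erase_subset _ _)⟩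
    · rw [card_insert_of_notMem (fun h => hcQ (mem_of_mem_erase h)), card_erase_add_one hz]
    · simp only [mem_insert, mem_erase, ne_eq, not_true_eq_false, false_and, or_false]
      rintro rfl
      exact hcQ hz
  · exact ⟨Q, z, hQS, rfl, hz, erase_subset _ _, subset_insert _ _⟩

lemma card_sub_le_card_sdiff {α : Type*} [DecidableEq α] (s t : Finset α) :
    (#s : ℝ) - #t ≤ #(s \ t) := by
  have := card_le_card_sdiff_add_card (s := s) (t := t)
  rw [sub_le_iff_le_add]
  exact_mod_cast this

lemma two_pow_le_factorial {L : ℕ} (hL : 4 ≤ L) : 2 ^ L ≤ L ! := by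
  induction L, hL using Nat.le_induction with
  | base => decide
  | succ k hk ih =>
    rw [pow_succ, Nat.factorial_succ, mul_comm (k + 1)]
    exact Nat.mul_le_mul ih (by omega)

lemma mem_Fset : Γ ∈ Fset n ↔ DigraphOn n Γ ∧ I3FreeOn n Γ := by
  simp [Fset]

lemma mem_DeltaOn {v w : Fin n} : w ∈ DeltaOn n Γ v ↔ NadjOn n Γ w v := by
  simp [DeltaOn]

lemma mem_DeltaSetOn {Q : Finset (Fin n)} {w : Fin n} :
    w ∈ DeltaSetOn n Γ Q ↔ (∃ q ∈ Q, NadjOn n Γ w q) ∧ w ∉ Q := by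
  simp [DeltaSetOn, mem_DeltaOn]

lemma self_notMem_DeltaOn (v : Fin n) : v ∉ DeltaOn n Γ v := by
  simp [mem_DeltaOn, NadjOn]

lemma adj_of_mem_DeltaSetOn (hΓ : I3FreeOn n Γ) {v w : Fin n} {Q : Finset (Fin n)}
    (hQ : Q ⊆ DeltaOn n Γ v) (hw : w ∈ DeltaSetOn n Γ Q) (hwv : w ≠ v) :
    Γ v w = true ∨ Γ w v = true := by
  obtain ⟨⟨q, hq, hwq⟩, -⟩ := mem_DeltaSetOn.1 hw
  have hqv := mem_DeltaOn.1 (hQ hq)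
  have := hΓ w q v hwq.1 hqv.1 hwv
  simp only [hwq.2.1, hwq.2.2, hqv.2.1, hqv.2.2, Bool.false_eq_true, false_or] at this
  exact this.symm

lemma not_nadj_of_mem_DeltaSetOn (hΓ : I3FreeOn n Γ) {v w : Fin n} {Q : Finset (Fin n)}
    (hQ : Q ⊆ DeltaOn n Γ v) (hw : w ∈ DeltaSetOn n Γ Q) (hwv : w ≠ v) :
    ¬NadjOn n Γ w v := fun h => by
  rcases adj_of_mem_DeltaSetOn hΓ hQ hw hwv with h' | h' <;> simp [h.2.1, h.2.2] at h'

lemma adj_of_nadj (hΓ : I3FreeOn n Γ) {x y w : Fin n} (hxy : NadjOn n Γ x y)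
    (hwx : w ≠ x) (hwy : w ≠ y) :
    Γ x w = true ∨ Γ w x = true ∨ Γ y w = true ∨ Γ w y = true := by
  have := hΓ x w y hwx.symm hwy hxy.1
  simp only [hxy.2.1, hxy.2.2, Bool.false_eq_true, or_false] at this
  tauto

lemma mem_DeltaSetOn_of_subset_insert {Q Q' : Finset (Fin n)} {z c w : Fin n}
    (h₁ : Q.erase z ⊆ Q') (h₂ : Q' ⊆ insert c Q) (hw : w ∈ DeltaSetOn n Γ Q) (hwc : w ≠ c)
    (hwz : ¬NadjOn n Γ w z) : w ∈ DeltaSetOn n Γ Q' := by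
  obtain ⟨⟨q, hq, hwq⟩, hwQ⟩ := mem_DeltaSetOn.1 hw
  have hqz : q ≠ z := by
    rintro rfl
    exact hwz hwq
  refine mem_DeltaSetOn.2 ⟨⟨q, h₁ (mem_erase.2 ⟨hqz, hq⟩), hwq⟩, fun hwQ' => ?_⟩
  rcases mem_insert.1 (h₂ hwQ') with h | h
  exacts [hwc h, hwQ h]

def restrictFin {m : ℕ} (e : Fin m ↪ Fin n) (E : Fin n → Fin n → Bool) :
    Fin m → Fin m → Bool :=
  fun a b => E (e a) (e b)

lemma restrictFin_mem_Fset {m : ℕ} (e : Fin m ↪ Fin n) (hΓ : Γ ∈ Fset n) :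
    restrictFin e Γ ∈ Fset m := by
  obtain ⟨⟨hirr, hasym⟩, hI⟩ := mem_Fset.1 hΓ
  exact mem_Fset.2 ⟨⟨fun a => hirr _, fun a b => hasym _ _⟩, fun a b c hab hbc hac =>
    hI _ _ _ (e.injective.ne hab) (e.injective.ne hbc) (e.injective.ne hac)⟩

lemma apply_eq_of_restrictFin_eq {m : ℕ} {e : Fin m ↪ Fin n} {Γ₁ Γ₂ : Fin n → Fin n → Bool}
    (h : restrictFin e Γ₁ = restrictFin e Γ₂) {u v : Fin n} (hu : u ∈ Set.range e)
    (hv : v ∈ Set.range e) : Γ₁ u v = Γ₂ u v := by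
  obtain ⟨a, rfl⟩ := hu
  obtain ⟨b, rfl⟩ := hv
  exact congrFun (congrFun h a) b

lemma card_compl_pair {x y : Fin n} (hxy : x ≠ y) :
    #({x, y}ᶜ : Finset (Fin n)) = n - 2 := by
  rw [card_compl, card_pair hxy, Fintype.card_fin]

lemma cast_card_compl_pair {x y : Fin n} (hxy : x ≠ y) :
    (#({x, y}ᶜ : Finset (Fin n)) : ℝ) = n - 2 := by
  have h := card_compl_add_card ({x, y} : Finset (Fin n))
  rw [card_pair hxy, Fintype.card_fin] at h
  rw [eq_sub_iff_add_eq]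
  exact_mod_cast h

noncomputable def pairComplEmb {x y : Fin n} (hxy : x ≠ y) : Fin (n - 2) ↪ Fin n :=
  (({x, y}ᶜ : Finset (Fin n)).orderEmbOfFin (card_compl_pair hxy)).toEmbedding

lemma mem_range_pairComplEmb {x y w : Fin n} (hxy : x ≠ y) :
    w ∈ Set.range (pairComplEmb hxy) ↔ w ∉ ({x, y} : Finset (Fin n)) := by
  simp only [pairComplEmb, RelEmbedding.coe_toEmbedding, range_orderEmbOfFin, coe_compl,
    Set.mem_compl_iff, mem_coe]

lemma DeltaSetOn_sdiff_congr {Γ₁ Γ₂ : Fin n → Fin n → Bool} {P Q : Finset (Fin n)}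
    (hQ : Disjoint Q P) (h : ∀ u v, u ∉ P → v ∉ P → Γ₁ u v = Γ₂ u v) :
    DeltaSetOn n Γ₁ Q \ P = DeltaSetOn n Γ₂ Q \ P := by
  ext w
  by_cases hw : w ∈ P
  · simp [hw]
  have key : ∀ q ∈ Q, NadjOn n Γ₁ w q ↔ NadjOn n Γ₂ w q := fun q hq => by
    have hq := disjoint_left.1 hQ hq
    simp only [NadjOn, h w q hw hq, h q w hq hw]
  simp only [mem_sdiff, mem_DeltaSetOn, hw, not_false_eq_true, and_true]
  exact and_congr_left' ⟨fun ⟨q, hq, h⟩ => ⟨q, hq, (key q hq).1 h⟩,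
    fun ⟨q, hq, h⟩ => ⟨q, hq, (key q hq).2 h⟩⟩

/-- The possible values of `(Γ x w, Γ w x, Γ y w, Γ w y)` for a vertex `w ∉ {x, y}` when
`x ≁ y`; the flags `fx`, `fy` record that `w` is forced to be adjacent to `x`, resp. `y`. -/
def profiles (fx fy : Bool) : Finset (Bool × Bool × Bool × Bool) :=
  univ.filter fun p => !(p.1 && p.2.1) && !(p.2.2.1 && p.2.2.2) &&
    (p.1 || p.2.1 || p.2.2.1 || p.2.2.2) && (!fx || p.1 || p.2.1) && (!fy || p.2.2.1 || p.2.2.2)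

lemma mk_mem_profiles {a b c d fx fy : Bool} (hab : a = true → b = false)
    (hcd : c = true → d = false) (hcov : a = true ∨ b = true ∨ c = true ∨ d = true)
    (hx : fx = true → a = true ∨ b = true) (hy : fy = true → c = true ∨ d = true) :
    (a, b, c, d) ∈ profiles fx fy := by
  revert a b c d fx fy
  decide

lemma card_profiles (fx fy : Bool) :
    #(profiles fx fy) = 8 - 2 * (fx.toNat + fy.toNat) := by
  cases fx <;> cases fy <;> decide

noncomputable def extProfiles (P Sx Sy : Finset (Fin n)) (w : Fin n) :
    Finset (Bool × Bool × Bool × Bool) :=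
  if w ∈ P then {(false, false, false, false)} else profiles (w ∈ Sx) (w ∈ Sy)

/-- `log₂ |extProfiles P Sx Sy w|` (namely `0`, `3`, `log₂ 6` or `2`), written linearly in the
indicators of `Pᶜ`, `Sx`, `Sy` and `Sx ∩ Sy` so that its sum over `w` is read off cardinalities. -/
noncomputable def vertexExp (P Sx Sy : Finset (Fin n)) (w : Fin n) : ℝ :=
  3 * (if w ∉ P then 1 else 0) -
    (2 - Real.logb 2 3) * ((if w ∈ Sx then 1 else 0) + (if w ∈ Sy then 1 else 0)) -
    (2 * Real.logb 2 3 - 3) * (if w ∈ Sx ∩ Sy then 1 else 0)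

lemma two_rpow_one_add_logb_two_three : (2 : ℝ) ^ (1 + Real.logb 2 3) = 6 := by
  rw [Real.rpow_add two_pos, Real.rpow_one, Real.rpow_logb two_pos (by norm_num) (by norm_num)]
  norm_num

lemma card_extProfiles {P Sx Sy : Finset (Fin n)} (hx : Disjoint Sx P) (hy : Disjoint Sy P)
    (w : Fin n) : (#(extProfiles P Sx Sy w) : ℝ) = 2 ^ vertexExp P Sx Sy w := by
  by_cases hw : w ∈ P
  · have hwx : w ∉ Sx := disjoint_right.1 hx hw
    have hwy : w ∉ Sy := disjoint_right.1 hy hw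
    simp [extProfiles, vertexExp, hw, hwx, hwy]
  by_cases hwx : w ∈ Sx <;> by_cases hwy : w ∈ Sy <;>
    simp only [extProfiles, vertexExp, hw, hwx, hwy, not_false_eq_true, if_false, if_true,
      mem_inter, and_true, and_false, decide_true, decide_false, card_profiles, Bool.toNat_true,
      Bool.toNat_false]
  all_goals ring_nf
  all_goals first | exact two_rpow_one_add_logb_two_three.symm | norm_num

lemma sum_vertexExp (P Sx Sy : Finset (Fin n)) :
    ∑ w, vertexExp P Sx Sy w = 3 * #Pᶜ - (2 - Real.logb 2 3) * (#Sx + #Sy) -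
      (2 * Real.logb 2 3 - 3) * #(Sx ∩ Sy) := by
  simp only [vertexExp, sum_sub_distrib, ← mul_sum, sum_add_distrib, sum_boole,
    ← compl_filter, filter_mem_eq_inter, univ_inter]

lemma prod_card_extProfiles {P Sx Sy : Finset (Fin n)} (hx : Disjoint Sx P)
    (hy : Disjoint Sy P) :
    ∏ w, (#(extProfiles P Sx Sy w) : ℝ) = 2 ^ (3 * #Pᶜ - (2 - Real.logb 2 3) * (#Sx + #Sy) -
      (2 * Real.logb 2 3 - 3) * #(Sx ∩ Sy)) := by
  rw [← sum_vertexExp, Real.rpow_sum_of_pos two_pos]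
  exact prod_congr rfl fun w _ => card_extProfiles hx hy w

def profileAt (x y : Fin n) (Γ : Fin n → Fin n → Bool) (w : Fin n) :
    Bool × Bool × Bool × Bool :=
  (Γ x w, Γ w x, Γ y w, Γ w y)

lemma eq_of_profileAt_eq {x y : Fin n} {Γ₁ Γ₂ : Fin n → Fin n → Bool}
    (h : ∀ u v, u ∉ ({x, y} : Finset (Fin n)) → v ∉ ({x, y} : Finset (Fin n)) → Γ₁ u v = Γ₂ u v)
    (hp : profileAt x y Γ₁ = profileAt x y Γ₂) : Γ₁ = Γ₂ := by
  funext u v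
  have hu := congrFun hp u
  have hv := congrFun hp v
  simp only [profileAt, Prod.mk.injEq] at hu hv
  by_cases hu' : u ∈ ({x, y} : Finset (Fin n))
  · rcases mem_insert.1 hu' with rfl | hu'
    · exact hv.1
    · rw [mem_singleton.1 hu']; exact hv.2.2.1
  by_cases hv' : v ∈ ({x, y} : Finset (Fin n))
  · rcases mem_insert.1 hv' with rfl | hv'
    · exact hu.2.1
    · rw [mem_singleton.1 hv']; exact hu.2.2.2
  exact h u v hu' hv'

local notation "γ" => (1 + 4 / 10 ^ 6 + 3 / 100 + Real.logb 2 3 * (1 - 2 / 10 ^ 6 - 2 / 100) : ℝ)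

structure CWitness (Γ : Fin n → Fin n → Bool) (x y : Fin n) (Qx Qy : Finset (Fin n)) :
    Prop where
  nadj : NadjOn n Γ x y
  subset_left : Qx ⊆ DeltaOn n Γ x
  subset_right : Qy ⊆ DeltaOn n Γ y
  disjoint_left : Disjoint Qx {x, y}
  disjoint_right : Disjoint Qy {x, y}
  card_left : (1 / 2 - 1 / 10 ^ 6 : ℝ) * n - 2 ≤ #(DeltaSetOn n Γ Qx \ {x, y})
  card_right : (1 / 2 - 1 / 10 ^ 6 : ℝ) * n - 2 ≤ #(DeltaSetOn n Γ Qy \ {x, y})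
  card_inter : (n : ℝ) / 100 - 4 ≤
    #((DeltaSetOn n Γ Qx \ {x, y}) ∩ (DeltaSetOn n Γ Qy \ {x, y}))

noncomputable def witnessSet (x y : Fin n) (Qx Qy : Finset (Fin n)) :
    Finset (Fin n → Fin n → Bool) :=
  {Γ ∈ Fset n | CWitness Γ x y Qx Qy}

lemma profileAt_mem_extProfiles (hΓ : Γ ∈ Fset n) {x y : Fin n} {Qx Qy : Finset (Fin n)}
    (hW : CWitness Γ x y Qx Qy) (w : Fin n) :
    profileAt x y Γ w ∈
      extProfiles {x, y} (DeltaSetOn n Γ Qx \ {x, y}) (DeltaSetOn n Γ Qy \ {x, y}) w := by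
  obtain ⟨⟨hirr, hasym⟩, hI⟩ := mem_Fset.1 hΓ
  have hforced : ∀ {v} {Q : Finset (Fin n)}, Q ⊆ DeltaOn n Γ v → v ∈ ({x, y} : Finset (Fin n)) →
      decide (w ∈ DeltaSetOn n Γ Q \ {x, y}) = true → Γ v w = true ∨ Γ w v = true :=
    fun hQ hv hw => adj_of_mem_DeltaSetOn hI hQ (mem_sdiff.1 (of_decide_eq_true hw)).1
      fun h => (mem_sdiff.1 (of_decide_eq_true hw)).2 (h ▸ hv)
  unfold extProfiles
  split_ifs with hw
  · rcases mem_insert.1 hw with rfl | hw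
    · simp [profileAt, hirr, hW.nadj.2.1, hW.nadj.2.2]
    · rw [mem_singleton.1 hw]
      simp [profileAt, hirr, hW.nadj.2.1, hW.nadj.2.2]
  simp only [mem_insert, mem_singleton, not_or] at hw
  exact mk_mem_profiles (hasym _ _) (hasym _ _) (adj_of_nadj hI hW.nadj hw.1 hw.2)
    (hforced hW.subset_left (by simp)) (hforced hW.subset_right (by simp))

lemma logb_two_three_le_two : Real.logb 2 3 ≤ 2 := by
  rw [Real.logb_le_iff_le_rpow one_lt_two (by norm_num)]
  norm_num

lemma three_le_two_mul_logb_two_three : 3 ≤ 2 * Real.logb 2 3 := by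
  calc (3 : ℝ) ≤ Real.logb 2 9 := by
        rw [Real.le_logb_iff_rpow_le one_lt_two (by norm_num)]
        norm_num
    _ = 2 * Real.logb 2 3 := by
        rw [show (9 : ℝ) = 3 ^ 2 by norm_num, Real.logb_pow]
        push_cast
        ring

lemma witness_exponent_le {N a b c : ℝ} (ha : (1 / 2 - 1 / 10 ^ 6) * N - 2 ≤ a)
    (hb : (1 / 2 - 1 / 10 ^ 6) * N - 2 ≤ b) (hc : N / 100 - 4 ≤ c) :
    3 * (N - 2) - (2 - Real.logb 2 3) * (a + b) - (2 * Real.logb 2 3 - 3) * c ≤ γ * N - 2 := by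
  have h₁ := mul_le_mul_of_nonneg_left (add_le_add ha hb)
    (sub_nonneg.2 logb_two_three_le_two)
  have h₂ := mul_le_mul_of_nonneg_left hc (sub_nonneg.2 three_le_two_mul_logb_two_three)
  nlinarith [logb_two_three_le_two]

lemma card_fiber_le {x y : Fin n} (hxy : x ≠ y) {Qx Qy : Finset (Fin n)}
    (D : Fin (n - 2) → Fin (n - 2) → Bool) :
    (#{Γ ∈ witnessSet x y Qx Qy | restrictFin (pairComplEmb hxy) Γ = D} : ℝ) ≤
      2 ^ (γ * n - 2) := by
  set S := {Γ ∈ witnessSet x y Qx Qy | restrictFin (pairComplEmb hxy) Γ = D}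
  obtain hS | ⟨Γ₀, hΓ₀⟩ := S.eq_empty_or_nonempty
  · rw [hS, card_empty, Nat.cast_zero]
    positivity
  have hmem : ∀ {Γ}, Γ ∈ S →
      Γ ∈ Fset n ∧ CWitness Γ x y Qx Qy ∧ restrictFin (pairComplEmb hxy) Γ = D := by
    simp [S, witnessSet, and_assoc]
  obtain ⟨-, hW₀, hD₀⟩ := hmem hΓ₀
  have hagree : ∀ Γ ∈ S, ∀ u v, u ∉ ({x, y} : Finset (Fin n)) → v ∉ ({x, y} : Finset (Fin n)) →
      Γ u v = Γ₀ u v := fun Γ hΓ u v hu hv =>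
    apply_eq_of_restrictFin_eq ((hmem hΓ).2.2.trans hD₀.symm)
      ((mem_range_pairComplEmb hxy).2 hu) ((mem_range_pairComplEmb hxy).2 hv)
  set Sx := DeltaSetOn n Γ₀ Qx \ {x, y}
  set Sy := DeltaSetOn n Γ₀ Qy \ {x, y}
  have hmaps : Set.MapsTo (profileAt x y) S (Fintype.piFinset (extProfiles {x, y} Sx Sy)) :=
    fun Γ hΓ => by
      obtain ⟨hF, hW, -⟩ := hmem hΓ
      have hSx : DeltaSetOn n Γ Qx \ {x, y} = Sx :=
        DeltaSetOn_sdiff_congr hW₀.disjoint_left (hagree Γ hΓ)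
      have hSy : DeltaSetOn n Γ Qy \ {x, y} = Sy :=
        DeltaSetOn_sdiff_congr hW₀.disjoint_right (hagree Γ hΓ)
      rw [mem_coe, Fintype.mem_piFinset, ← hSx, ← hSy]
      exact profileAt_mem_extProfiles hF hW
  have hinj : Set.InjOn (profileAt x y) S := fun Γ₁ h₁ Γ₂ h₂ hp =>
    eq_of_profileAt_eq (fun u v hu hv => (hagree Γ₁ h₁ u v hu hv).trans
      (hagree Γ₂ h₂ u v hu hv).symm) hp
  calc (#S : ℝ) ≤ #(Fintype.piFinset (extProfiles {x, y} Sx Sy)) := by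
        exact_mod_cast card_le_card_of_injOn _ hmaps hinj
    _ = ∏ w, (#(extProfiles {x, y} Sx Sy w) : ℝ) := by
        rw [Fintype.card_piFinset]
        push_cast
        rfl
    _ = _ := prod_card_extProfiles sdiff_disjoint sdiff_disjoint
    _ ≤ 2 ^ (γ * n - 2) := by
        apply Real.rpow_le_rpow_of_exponent_le one_le_two
        rw [cast_card_compl_pair hxy]
        exact witness_exponent_le hW₀.card_left hW₀.card_right hW₀.card_inter

lemma card_witnessSet_le {x y : Fin n} (hxy : x ≠ y) (Qx Qy : Finset (Fin n)) :
    (#(witnessSet x y Qx Qy) : ℝ) ≤ #(Fset (n - 2)) * 2 ^ (γ * n - 2) := by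
  rw [card_eq_sum_card_fiberwise (s := witnessSet x y Qx Qy) (t := Fset (n - 2))
    (f := restrictFin (pairComplEmb hxy))
    fun Γ hΓ => restrictFin_mem_Fset _ (mem_filter.1 hΓ).1]
  push_cast
  calc _ ≤ ∑ _D ∈ Fset (n - 2), (2 : ℝ) ^ (γ * n - 2) :=
        sum_le_sum fun D _ => card_fiber_le hxy D
    _ = _ := by rw [sum_const, nsmul_eq_mul]

lemma lt_card_DeltaOn (hF : Γ ∈ Fset n) (hA : Γ ∉ Aset n) (v : Fin n) :
    Nat.log 2 n < #(DeltaOn n Γ v) := by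
  by_contra h
  exact hA (mem_filter.2 ⟨hF, v, not_lt.1 h⟩)

lemma lt_card_DeltaSetOn (hF : Γ ∈ Fset n) (hA : Γ ∉ Aset n) (hB : Γ ∉ Bset n) {v : Fin n}
    {Q : Finset (Fin n)} (hQ : Q ⊆ DeltaOn n Γ v) (hcard : #Q = Nat.log 2 n) :
    (1 / 2 - 1 / 10 ^ 6 : ℝ) * n < #(DeltaSetOn n Γ Q) := by
  by_contra h
  exact hB (mem_filter.2 ⟨mem_sdiff.2 ⟨hF, hA⟩, v, Q, hQ, hcard, not_lt.1 h⟩)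

/-- A vertex `y ∈ Δ(x)` may lie in `Q_x`; swapping it out for another vertex of `Δ(x)`
(available as `Γ ∉ A(n)`) costs little, since every vertex of `Δ(Q_y)` is adjacent to `y`. -/
lemma exists_cWitness (hΓ : Γ ∈ Cset n) :
    ∃ x y Qx Qy, x ≠ y ∧ #Qx = Nat.log 2 n ∧ #Qy = Nat.log 2 n ∧ CWitness Γ x y Qx Qy := by
  obtain ⟨hmem, x, y, hxy, hnadj, Qx, hQx, Qy, hQy, hcx, hcy, hinter⟩ := mem_filter.1 hΓ
  obtain ⟨hF, hAB⟩ := mem_sdiff.1 hmem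
  have hA : Γ ∉ Aset n := fun h => hAB (mem_union_left _ h)
  have hB : Γ ∉ Bset n := fun h => hAB (mem_union_right _ h)
  have hI := (mem_Fset.1 hF).2
  obtain ⟨Qx', cx, hQx', hcx', hyQx', hQxQx', hQx'Qx⟩ :=
    exists_swap_out hQx (hcx ▸ lt_card_DeltaOn hF hA x) y
  obtain ⟨Qy', cy, hQy', hcy', hxQy', hQyQy', hQy'Qy⟩ :=
    exists_swap_out hQy (hcy ▸ lt_card_DeltaOn hF hA y) x
  have hsize : ∀ {v} {Q : Finset (Fin n)}, Q ⊆ DeltaOn n Γ v → #Q = Nat.log 2 n →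
      (1 / 2 - 1 / 10 ^ 6 : ℝ) * n - 2 ≤ #(DeltaSetOn n Γ Q \ {x, y}) := by
    intro v Q hQ hcard
    have := card_sub_le_card_sdiff (DeltaSetOn n Γ Q) {x, y}
    have : (#({x, y} : Finset (Fin n)) : ℝ) ≤ 2 := by exact_mod_cast card_le_two
    linarith [lt_card_DeltaSetOn hF hA hB hQ hcard]
  have hsub : (DeltaSetOn n Γ Qx ∩ DeltaSetOn n Γ Qy) \ {x, y, cx, cy} ⊆
      (DeltaSetOn n Γ Qx' \ {x, y}) ∩ (DeltaSetOn n Γ Qy' \ {x, y}) := fun w hw => by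
    simp only [mem_sdiff, mem_inter, mem_insert, mem_singleton, not_or] at hw ⊢
    obtain ⟨⟨hwx', hwy'⟩, hwx, hwy, hwcx, hwcy⟩ := hw
    have hnx := not_nadj_of_mem_DeltaSetOn hI hQx hwx' hwx
    have hny := not_nadj_of_mem_DeltaSetOn hI hQy hwy' hwy
    exact ⟨⟨mem_DeltaSetOn_of_subset_insert hQxQx' hQx'Qx hwx' hwcx hny, hwx, hwy⟩,
      mem_DeltaSetOn_of_subset_insert hQyQy' hQy'Qy hwy' hwcy hnx, hwx, hwy⟩
  refine ⟨x, y, Qx', Qy', hxy, hcx'.trans hcx, hcy'.trans hcy, hnadj, hQx', hQy', ?_, ?_,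
    hsize hQx' (hcx'.trans hcx), hsize hQy' (hcy'.trans hcy), ?_⟩
  · exact disjoint_insert_right.2
      ⟨fun h => self_notMem_DeltaOn x (hQx' h), disjoint_singleton_right.2 hyQx'⟩
  · exact disjoint_insert_right.2
      ⟨hxQy', disjoint_singleton_right.2 fun h => self_notMem_DeltaOn y (hQy' h)⟩
  · have h₁ := card_sub_le_card_sdiff (DeltaSetOn n Γ Qx ∩ DeltaSetOn n Γ Qy) {x, y, cx, cy}
    have h₂ : (#({x, y, cx, cy} : Finset (Fin n)) : ℝ) ≤ 4 := by exact_mod_cast card_le_four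
    have h₃ : (#((DeltaSetOn n Γ Qx ∩ DeltaSetOn n Γ Qy) \ {x, y, cx, cy}) : ℝ) ≤
        #((DeltaSetOn n Γ Qx' \ {x, y}) ∩ (DeltaSetOn n Γ Qy' \ {x, y})) := by
      exact_mod_cast card_le_card hsub
    linarith

lemma mul_choose_log_le (hn : 16 ≤ n) :
    n * n.choose (Nat.log 2 n) ≤ 2 ^ (Nat.log 2 n ^ 2 + Nat.log 2 n + 1) := by
  set L := Nat.log 2 n
  have hL : 4 ≤ L := by
    calc 4 = Nat.log 2 (2 ^ 4) := (Nat.log_pow one_lt_two 4).symm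
      _ ≤ L := Nat.log_mono_right hn
  refine Nat.le_of_mul_le_mul_right ?_ (pow_pos two_pos L)
  calc n * n.choose L * 2 ^ L ≤ n * (L ! * n.choose L) := by
        rw [mul_assoc, mul_comm (n.choose L)]
        exact Nat.mul_le_mul_left n (Nat.mul_le_mul_right _ (two_pow_le_factorial hL))
    _ ≤ n * n ^ L := by
        rw [← Nat.descFactorial_eq_factorial_mul_choose]
        exact Nat.mul_le_mul_left n (Nat.descFactorial_le_pow n L)
    _ = n ^ (L + 1) := by ring
    _ ≤ (2 ^ (L + 1)) ^ (L + 1) :=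
        Nat.pow_le_pow_left (Nat.lt_pow_succ_log_self one_lt_two n).le _
    _ = 2 ^ (L ^ 2 + L + 1) * 2 ^ L := by rw [← pow_mul, ← pow_add]; ring_nf

noncomputable def witnessTuples (n : ℕ) :
    Finset ((Fin n × Fin n) × Finset (Fin n) × Finset (Fin n)) :=
  (univ : Finset (Fin n)).offDiag ×ˢ
    (powersetCard (Nat.log 2 n) univ ×ˢ powersetCard (Nat.log 2 n) univ)

lemma card_witnessTuples_le (hn : 16 ≤ n) :
    #(witnessTuples n) ≤ 2 ^ (2 * Nat.log 2 n ^ 2 + 2 * Nat.log 2 n + 2) := by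
  set L := Nat.log 2 n
  calc #(witnessTuples n) = (n * n - n) * (n.choose L * n.choose L) := by
        simp [witnessTuples, offDiag_card, card_powersetCard, L]
    _ ≤ (n * n.choose L) * (n * n.choose L) := by
        rw [mul_mul_mul_comm]
        exact Nat.mul_le_mul_right _ (Nat.sub_le _ _)
    _ ≤ 2 ^ (L ^ 2 + L + 1) * 2 ^ (L ^ 2 + L + 1) :=
        Nat.mul_le_mul (mul_choose_log_le hn) (mul_choose_log_le hn)
    _ = 2 ^ (2 * L ^ 2 + 2 * L + 2) := by rw [← pow_add]; ring_nf

lemma Cset_subset_biUnion_witnessSet :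
    Cset n ⊆ (witnessTuples n).biUnion fun t => witnessSet t.1.1 t.1.2 t.2.1 t.2.2 := by
  intro Γ hΓ
  obtain ⟨x, y, Qx, Qy, hxy, hcx, hcy, hW⟩ := exists_cWitness hΓ
  exact mem_biUnion.2 ⟨((x, y), Qx, Qy), by simp [witnessTuples, hxy, hcx, hcy],
    mem_filter.2 ⟨(mem_sdiff.1 (mem_filter.1 hΓ).1).1, hW⟩⟩

lemma card_Cset_le :
    (#(Cset n) : ℝ) ≤ #(witnessTuples n) * (#(Fset (n - 2)) * 2 ^ (γ * n - 2)) := by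
  calc (#(Cset n) : ℝ) ≤ ∑ t ∈ witnessTuples n, (#(witnessSet t.1.1 t.1.2 t.2.1 t.2.2) : ℝ) := by
        exact_mod_cast (card_le_card Cset_subset_biUnion_witnessSet).trans card_biUnion_le
    _ ≤ ∑ _t ∈ witnessTuples n, (#(Fset (n - 2)) : ℝ) * 2 ^ (γ * n - 2) :=
        sum_le_sum fun t ht =>
          card_witnessSet_le (mem_offDiag.1 (mem_product.1 ht).1).2.2 _ _
    _ = _ := by rw [sum_const, nsmul_eq_mul]

end I3Free

open I3Free in
/-- For sufficiently large `n`, with `α = log₂ 3` and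
`γ = 1 + 4/10⁶ + 3/100 + α·(1 − 2/10⁶ − 2/100)`,
`|C(n)| ≤ 2^(γ·n + 2(log₂ n)² + 2·log₂ n) · |F(n−2)|`. -/
theorem Ccard_le :
    ∃ N : ℕ, ∀ n : ℕ, N ≤ n →
      ((Cset n).card : ℝ) ≤
        (2 : ℝ) ^ ((1 + 4 / 10 ^ 6 + 3 / 100 +
              Real.logb 2 3 * (1 - 2 / 10 ^ 6 - 2 / 100)) * (n : ℝ) +
            2 * (Nat.log 2 n : ℝ) ^ 2 + 2 * (Nat.log 2 n : ℝ)) *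
          ((Fset (n - 2)).card : ℝ) := by
  refine ⟨16, fun n hn => (card_Cset_le (n := n)).trans ?_⟩
  have hT : ((witnessTuples n).card : ℝ) ≤
      (2 : ℝ) ^ ((2 * Nat.log 2 n ^ 2 + 2 * Nat.log 2 n + 2 : ℕ) : ℝ) := by
    rw [Real.rpow_natCast]
    exact_mod_cast card_witnessTuples_le hn
  refine (mul_le_mul_of_nonneg_right hT (by positivity)).trans_eq ?_
  rw [mul_left_comm, ← Real.rpow_add two_pos, mul_comm]
  congr 2
  push_cast
  ring
end

section
/- There is an N such that for all n ≥ N the following holds. Let Γ be an I₃-free digraph on n vertices such that: (i) every vertex v satisfies |Δ(v)| > ⌊log₂ n⌋; (ii) for every vertex v and every Q ⊆ Δ(v) with |Q| = ⌊log₂ n⌋ one has |Δ(Q)| > (1/2 − 10⁻⁶)·n; and (iii) for all distinct x, y with x ≁ y and all Q_x ⊆ Δ(x), Q_y ⊆ Δ(y) with |Q_x| = |Q_y| = ⌊log₂ n⌋ one has |Δ(Q_x) ∩ Δ(Q_y)| < n/100. Then Γ contains no pinwheel on 5 vertices, i.e., there are no distinct vertices v₀, v₁, v₂, v₃, v₄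 with v_i ≁ v_{i+1 (mod 5)} for all i. -/
open scoped Classical

/-! Pick `Qᵢ ⊆ Δ(vᵢ)` of size `⌊log₂ n⌋` along a pinwheel `v₀ … v₄` and let `Aᵢ = Δ(Qᵢ)`.
Each `Aᵢ` has more than `(1/2 − 10⁻⁶) n` elements while cyclically consecutive ones meet in
fewer than `n/100`. A vertex lying in three of five cyclically arranged sets lies in two
consecutive ones, so `∑ |Aᵢ| ≤ 2n + 3 ∑ |Aᵢ ∩ Aᵢ₊₁| < 2.15 n`, contradicting `∑ |Aᵢ| > 2.49 n`. -/

open Finset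

theorem sum_card_eq_sum_card_filter_mem {ι α : Type*} [Fintype ι] [Fintype α] [DecidableEq α]
    (B : ι → Finset α) : ∑ i, #(B i) = ∑ x, #{i | x ∈ B i} := by
  simpa only [bipartiteAbove, bipartiteBelow, filter_univ_mem] using
    sum_card_bipartiteAbove_eq_sum_card_bipartiteBelow (s := univ) (t := univ)
      (fun i x => x ∈ B i)

theorem card_le_two_add_three_mul_card_filter_succ_mem (s : Finset (Fin 5)) :
    #s ≤ 2 + 3 * #{i ∈ s | i + 1 ∈ s} := by
  revert s; decide

theorem sum_card_le_of_cycle_five {α : Type*} [Fintype α] [DecidableEq α]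
    (A : Fin 5 → Finset α) :
    ∑ i, #(A i) ≤ 2 * Fintype.card α + 3 * ∑ i, #(A i ∩ A (i + 1)) := by
  rw [sum_card_eq_sum_card_filter_mem A,
    sum_card_eq_sum_card_filter_mem fun i => A i ∩ A (i + 1), mul_sum]
  calc ∑ x, #{i | x ∈ A i} ≤ ∑ x, (2 + 3 * #{i | x ∈ A i ∩ A (i + 1)}) :=
        sum_le_sum fun x _ => by
          simpa only [mem_inter, filter_filter, mem_filter, mem_univ, true_and] using
            card_le_two_add_three_mul_card_filter_succ_mem {i | x ∈ A i}
    _ = 2 * Fintype.card α + ∑ x, 3 * #{i | x ∈ A i ∩ A (i + 1)} := by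
        rw [sum_add_distrib, sum_const, card_univ, smul_eq_mul, mul_comm]

theorem five_mul_lt_of_cycle_five {α : Type*} [Fintype α] [DecidableEq α]
    (A : Fin 5 → Finset α) {a b : ℝ} (ha : ∀ i, a < #(A i))
    (hb : ∀ i, (#(A i ∩ A (i + 1)) : ℝ) < b) :
    5 * a < 2 * Fintype.card α + 15 * b := by
  have hsum : 5 * a < ∑ i, (#(A i) : ℝ) := by
    simpa using sum_lt_sum_of_nonempty univ_nonempty fun i _ => ha i
  have hsum_inter : ∑ i, (#(A i ∩ A (i + 1)) : ℝ) < 5 * b := by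
    simpa using sum_lt_sum_of_nonempty univ_nonempty fun i _ => hb i
  have hcount :
      ∑ i, (#(A i) : ℝ) ≤ 2 * Fintype.card α + 3 * ∑ i, (#(A i ∩ A (i + 1)) : ℝ) := by
    exact_mod_cast sum_card_le_of_cycle_five A
  linarith

/-- For all sufficiently large `n`, an I₃-free digraph on `n` vertices in which
(i) every vertex `v` has `|Δ(v)| > ⌊log₂ n⌋`,
(ii) every `Q ⊆ Δ(v)` with `|Q| = ⌊log₂ n⌋` has `|Δ(Q)| > (1/2 − 10⁻⁶)·n`, and
(iii) whenever `x ≁ y` and `Qx ⊆ Δ(x)`, `Qy ⊆ Δ(y)` have size `⌊log₂ n⌋`,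
`|Δ(Qx) ∩ Δ(Qy)| < n/100`,
contains no pinwheel on 5 vertices. -/
theorem no_pinwheel_5 :
    ∃ N : ℕ, ∀ n : ℕ, N ≤ n → ∀ E : Fin n → Fin n → Bool,
      DigraphOn n E → I3FreeOn n E →
      (∀ v : Fin n, Nat.log 2 n < (DeltaOn n E v).card) →
      (∀ v : Fin n, ∀ Q ⊆ DeltaOn n E v, Q.card = Nat.log 2 n →
        (1 / 2 - 1 / 10 ^ 6 : ℝ) * n < ((DeltaSetOn n E Q).card : ℝ)) →
      (∀ x y : Fin n, x ≠ y → NadjOn n E x y →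
        ∀ Qx ⊆ DeltaOn n E x, ∀ Qy ⊆ DeltaOn n E y,
          Qx.card = Nat.log 2 n → Qy.card = Nat.log 2 n →
          ((DeltaSetOn n E Qx ∩ DeltaSetOn n E Qy).card : ℝ) < (n : ℝ) / 100) →
      ¬ ∃ v : Fin 5 → Fin n, Function.Injective v ∧
          ∀ i : Fin 5, NadjOn n E (v i) (v (i + 1)) := by
  refine ⟨0, fun n _ E _ _ hdeg hlarge hsparse ⟨v, _, hpinwheel⟩ => ?_⟩
  choose Q hQ hQcard using fun i => exists_subset_card_eq (hdeg (v i)).le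
  have key := five_mul_lt_of_cycle_five (fun i => DeltaSetOn n E (Q i))
    (fun i => hlarge (v i) (Q i) (hQ i) (hQcard i))
    (fun i => hsparse _ _ (hpinwheel i).1 (hpinwheel i) _ (hQ i) _ (hQ (i + 1)) (hQcard i)
      (hQcard (i + 1)))
  rw [Fintype.card_fin] at key
  linarith [(n.cast_nonneg : (0 : ℝ) ≤ n)]
end

section
/- There is an N such that for all n ≥ N the following holds. Let Γ be an I₃-free digraph on n vertices such that: (i) every vertex v satisfies |Δ(v)| > ⌊log₂ n⌋; (ii) for every vertex v and every Q ⊆ Δ(v) with |Q| = ⌊log₂ n⌋ one has |Δ(Q)| > (1/2 − 10⁻⁶)·n; and (iii) for all distinct x, y with x ≁ y and all Q_x ⊆ Δ(x), Q_y ⊆ Δ(y) with |Q_x| = |Q_y| = ⌊log₂ n⌋ one has |Δ(Q_x) ∩ Δ(Q_y)| < n/100. Then Γ contains no pinwheel on 7 vertices, i.e., there are no distinct vertices v₀,…,v₆ with v_i ≁ v_{i+1 (mod 7)} for all i. -/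
open scoped Classical

/-! Pick `Q_i ⊆ Δ(v_i)` of size `⌊log₂ n⌋` around the pinwheel and set `D_i = Δ(Q_i)`.
By (ii) and (iii) each `D_i` fills almost half of the vertex set while consecutive ones barely
meet, so consecutive sets are almost complementary and `D_i` almost equals `D_{i+2}`.
Hence `D_0 ≈ D_2 ≈ D_4 ≈ D_6`, which contradicts `D_6 ∩ D_0` being small. Quantitatively, an odd
cycle of length `2k+1` of sets of size `> (1/2 - ε)n` with consecutive overlaps `< δn` forces
`1/2 < (2k+1)(δ+ε)`, which fails for `k = 3`, `δ = 1/100`, `ε = 10⁻⁶`. -/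

open Finset

section NearHalves

variable {α : Type*} [Fintype α] [DecidableEq α]

lemma card_sdiff_le_card_inter_add_card_compl_union (A B C : Finset α) :
    #(A \ C) ≤ #(A ∩ B) + #(B ∪ C)ᶜ := by
  calc #(A \ C) ≤ #((A ∩ B) ∪ (B ∪ C)ᶜ) := by
        refine card_le_card fun x hx => ?_
        simp only [mem_sdiff, mem_union, mem_inter, mem_compl] at hx ⊢
        tauto
    _ ≤ #(A ∩ B) + #(B ∪ C)ᶜ := card_union_le _ _

lemma card_compl_union_add_card_add_card (B C : Finset α) :
    #(B ∪ C)ᶜ + #B + #C = Fintype.card α + #(B ∩ C) := by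
  have := card_compl_add_card (B ∪ C)
  have := card_union_add_card_inter B C
  omega

lemma card_sdiff_lt_of_near_half {ε δ : ℝ} {A B C : Finset α}
    (hB : (1 / 2 - ε) * Fintype.card α < #B) (hC : (1 / 2 - ε) * Fintype.card α < #C)
    (hAB : (#(A ∩ B) : ℝ) < δ * Fintype.card α) (hBC : (#(B ∩ C) : ℝ) < δ * Fintype.card α) :
    (#(A \ C) : ℝ) < 2 * (δ + ε) * Fintype.card α := by
  have hsdiff : (#(A \ C) : ℝ) ≤ #(A ∩ B) + #(B ∪ C)ᶜ := by
    exact_mod_cast card_sdiff_le_card_inter_add_card_compl_union A B C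
  have hcompl : (#(B ∪ C)ᶜ : ℝ) + #B + #C = Fintype.card α + #(B ∩ C) := by
    exact_mod_cast card_compl_union_add_card_add_card B C
  linarith

lemma card_sdiff_le_of_near_half_chain {ε δ : ℝ} {D : ℕ → Finset α}
    (hlarge : ∀ i, (1 / 2 - ε) * Fintype.card α < #(D i))
    (hoverlap : ∀ i, (#(D i ∩ D (i + 1)) : ℝ) < δ * Fintype.card α) (k : ℕ) :
    (#(D 0 \ D (2 * k)) : ℝ) ≤ 2 * k * (δ + ε) * Fintype.card α := by
  induction k with
  | zero => simp
  | succ k ih =>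
    have hstep := card_sdiff_lt_of_near_half (hlarge (2 * k + 1)) (hlarge (2 * k + 2))
      (hoverlap (2 * k)) (hoverlap (2 * k + 1))
    have htriangle : (#(D 0 \ D (2 * (k + 1))) : ℝ)
        ≤ #(D 0 \ D (2 * k)) + #(D (2 * k) \ D (2 * k + 2)) := by
      exact_mod_cast (card_le_card (sdiff_triangle _ _ _)).trans (card_union_le _ _)
    push_cast
    linarith

theorem one_half_lt_of_near_half_odd_cycle {ε δ : ℝ} {D : ℕ → Finset α} {k : ℕ}
    (hlarge : ∀ i, (1 / 2 - ε) * Fintype.card α < #(D i))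
    (hoverlap : ∀ i, (#(D i ∩ D (i + 1)) : ℝ) < δ * Fintype.card α)
    (hperiod : D (2 * k + 1) = D 0) :
    1 / 2 < (2 * k + 1) * (δ + ε) := by
  have hchain := card_sdiff_le_of_near_half_chain hlarge hoverlap k
  have hclose := hoverlap (2 * k)
  rw [hperiod, inter_comm] at hclose
  have hsplit : (#(D 0 ∩ D (2 * k)) : ℝ) + #(D 0 \ D (2 * k)) = #(D 0) := by
    exact_mod_cast card_inter_add_card_sdiff (D 0) (D (2 * k))
  have h0 := hlarge 0
  by_contra! hle
  nlinarith [(Fintype.card α).cast_nonneg (α := ℝ)]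

end NearHalves

/-- For all sufficiently large `n`, an I₃-free digraph on `n` vertices in which
(i) every vertex `v` has `|Δ(v)| > ⌊log₂ n⌋`,
(ii) every `Q ⊆ Δ(v)` with `|Q| = ⌊log₂ n⌋` has `|Δ(Q)| > (1/2 − 10⁻⁶)·n`, and
(iii) whenever `x ≁ y` and `Qx ⊆ Δ(x)`, `Qy ⊆ Δ(y)` have size `⌊log₂ n⌋`,
`|Δ(Qx) ∩ Δ(Qy)| < n/100`,
contains no pinwheel on 7 vertices. -/
theorem no_pinwheel_7 :
    ∃ N : ℕ, ∀ n : ℕ, N ≤ n → ∀ E : Fin n → Fin n → Bool,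
      DigraphOn n E → I3FreeOn n E →
      (∀ v : Fin n, Nat.log 2 n < (DeltaOn n E v).card) →
      (∀ v : Fin n, ∀ Q ⊆ DeltaOn n E v, Q.card = Nat.log 2 n →
        (1 / 2 - 1 / 10 ^ 6 : ℝ) * n < ((DeltaSetOn n E Q).card : ℝ)) →
      (∀ x y : Fin n, x ≠ y → NadjOn n E x y →
        ∀ Qx ⊆ DeltaOn n E x, ∀ Qy ⊆ DeltaOn n E y,
          Qx.card = Nat.log 2 n → Qy.card = Nat.log 2 n →
          ((DeltaSetOn n E Qx ∩ DeltaSetOn n E Qy).card : ℝ) < (n : ℝ) / 100) →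
      ¬ ∃ v : Fin 7 → Fin n, Function.Injective v ∧
          ∀ i : Fin 7, NadjOn n E (v i) (v (i + 1)) := by
  refine ⟨0, fun n _ E _ _ hdeg hlarge hoverlap ⟨v, _, hpin⟩ => ?_⟩
  choose Q hQsub hQcard using fun i : Fin 7 => exists_subset_card_eq (hdeg (v i)).le
  let D : ℕ → Finset (Fin n) := fun i => DeltaSetOn n E (Q (Fin.ofNat 7 i))
  have hDlarge : ∀ i, (1 / 2 - 1 / 10 ^ 6) * Fintype.card (Fin n) < (#(D i) : ℝ) := fun i => by
    rw [Fintype.card_fin]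
    exact hlarge _ _ (hQsub _) (hQcard _)
  have hDoverlap : ∀ i, (#(D i ∩ D (i + 1)) : ℝ) < 1 / 100 * Fintype.card (Fin n) := fun i => by
    have h := hoverlap _ _ (hpin (Fin.ofNat 7 i)).1 (hpin (Fin.ofNat 7 i))
      _ (hQsub _) _ (hQsub _) (hQcard _) (hQcard _)
    have hsucc : Fin.ofNat 7 (i + 1) = Fin.ofNat 7 i + 1 := by
      ext
      simp [Fin.val_add, Nat.add_mod]
    rw [Fintype.card_fin]
    simp only [D, hsucc]
    linarith
  have hperiod : D (2 * 3 + 1) = D 0 := rfl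
  have hcycle := one_half_lt_of_near_half_odd_cycle hDlarge hDoverlap hperiod
  norm_num at hcycle
end

section
/- There is an N such that for all n ≥ N the following holds. Let Γ be an I₃-free digraph on n vertices such that: (i) every vertex v satisfies |Δ(v)| > ⌊log₂ n⌋; (ii) for every vertex v and every Q ⊆ Δ(v) with |Q| = ⌊log₂ n⌋ one has |Δ(Q)| > (1/2 − 10⁻⁶)·n; and (iii) for all distinct x, y with x ≁ y and all Q_x ⊆ Δ(x), Q_y ⊆ Δ(y) with |Q_x| = |Q_y| = ⌊log₂ n⌋ one has |Δ(Q_x) ∩ Δ(Q_y)| < n/100. Then Γ contains no pinwheel on 9 vertices, i.e., there are no distinct vertices v₀,…,v₈ with v_i ≁ v_{i+1 (mod 9)} for all i. -/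
open scoped Classical

/-!
Choose `Q i ⊆ Δ(v i)` of size `⌊log₂ n⌋` along the pinwheel and put `A i = Δ(Q i)`.
By (ii) every `A i` holds almost half of the vertices, and by (iii) consecutive ones barely
meet, so `A (i + 1)` differs from the complement of `A i` in fewer than `n / 49` vertices.
Going once around the odd cycle, `A 0` would differ from its own complement in fewer than
`9 n / 49 < n` vertices, whereas `A 0 ∆ (A 0)ᶜ` is the whole vertex set.
-/

open Finset
open scoped symmDiff

theorem iterate_compl_symmDiff_iterate_compl {α : Type*} [BooleanAlgebra α] (a b : α) (j : ℕ) :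
    compl^[j] a ∆ compl^[j] b = a ∆ b := by
  induction j with
  | zero => rfl
  | succ j ih => rw [Function.iterate_succ_apply', Function.iterate_succ_apply',
      compl_symmDiff_compl, ih]

section SymmDiff

variable {α : Type*} [Fintype α] [DecidableEq α]

theorem Finset.card_symmDiff_triangle (X Y Z : Finset α) : #(X ∆ Z) ≤ #(X ∆ Y) + #(Y ∆ Z) :=
  (card_le_card (symmDiff_triangle X Y Z)).trans (card_union_le _ _)

theorem Finset.card_symmDiff_compl_add_card_add_card (X Y : Finset α) :
    #(X ∆ Yᶜ) + #X + #Y = 2 * #(X ∩ Y) + Fintype.card α := by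
  have hsplit : X ∆ Yᶜ = (X ∩ Y) ∪ (X ∪ Y)ᶜ := by
    ext a; simp only [mem_symmDiff, mem_compl, mem_inter, mem_union]; tauto
  have hdisj : Disjoint (X ∩ Y) (X ∪ Y)ᶜ :=
    disjoint_compl_right.mono_left inter_subset_union
  have hunion := card_union_add_card_inter X Y
  have hcompl := card_compl_add_card (X ∪ Y)
  rw [hsplit, card_union_of_disjoint hdisj]
  omega

theorem Finset.card_symmDiff_iterate_compl_le_sum (A : ℕ → Finset α) (j : ℕ) :
    #(A 0 ∆ compl^[j] (A j)) ≤ ∑ i ∈ range j, #(A i ∆ (A (i + 1))ᶜ) := by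
  induction j with
  | zero => simp
  | succ j ih =>
    have hstep : compl^[j] (A j) ∆ compl^[j + 1] (A (j + 1)) = A j ∆ (A (j + 1))ᶜ := by
      rw [Function.iterate_succ_apply, iterate_compl_symmDiff_iterate_compl]
    calc #(A 0 ∆ compl^[j + 1] (A (j + 1)))
        ≤ #(A 0 ∆ compl^[j] (A j)) + #(compl^[j] (A j) ∆ compl^[j + 1] (A (j + 1))) :=
          card_symmDiff_triangle _ _ _
      _ ≤ ∑ i ∈ range (j + 1), #(A i ∆ (A (i + 1))ᶜ) := by
          rw [hstep, sum_range_succ]; exact Nat.add_le_add_right ih _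

theorem Finset.card_symmDiff_compl_lt_of_inter_lt {X Y : Finset α} {ε δ : ℝ}
    (hX : (1 / 2 - ε) * Fintype.card α < #X) (hY : (1 / 2 - ε) * Fintype.card α < #Y)
    (hXY : #(X ∩ Y) < δ * Fintype.card α) :
    #(X ∆ Yᶜ) < (2 * ε + 2 * δ) * Fintype.card α := by
  have hcount : (#(X ∆ Yᶜ) : ℝ) + #X + #Y = 2 * #(X ∩ Y) + Fintype.card α := by
    exact_mod_cast card_symmDiff_compl_add_card_add_card X Y
  linarith

open Fin.NatCast in
theorem Finset.card_le_sum_card_symmDiff_compl_of_odd {m : ℕ} [NeZero m] (hm : Odd m)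
    (A : Fin m → Finset α) : Fintype.card α ≤ ∑ i, #(A i ∆ (A (i + 1))ᶜ) := by
  have hcycle := card_symmDiff_iterate_compl_le_sum (fun j : ℕ => A (j : Fin m)) m
  rw [Fin.natCast_self, Nat.cast_zero, compl_involutive.iterate_odd hm, symmDiff_compl_self,
    top_eq_univ, card_univ,
    ← Fin.sum_univ_eq_sum_range fun i => #(A (i : Fin m) ∆ (A ((i + 1 : ℕ) : Fin m))ᶜ)] at hcycle
  simpa only [Fin.cast_val_eq_self, Nat.cast_succ] using hcycle

end SymmDiff

/-- For all sufficiently large `n`, an I₃-free digraph on `n` vertices in which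
(i) every vertex `v` has `|Δ(v)| > ⌊log₂ n⌋`,
(ii) every `Q ⊆ Δ(v)` with `|Q| = ⌊log₂ n⌋` has `|Δ(Q)| > (1/2 − 10⁻⁶)·n`, and
(iii) whenever `x ≁ y` and `Qx ⊆ Δ(x)`, `Qy ⊆ Δ(y)` have size `⌊log₂ n⌋`,
`|Δ(Qx) ∩ Δ(Qy)| < n/100`,
contains no pinwheel on 9 vertices. -/
theorem no_pinwheel_9 :
    ∃ N : ℕ, ∀ n : ℕ, N ≤ n → ∀ E : Fin n → Fin n → Bool,
      DigraphOn n E → I3FreeOn n E →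
      (∀ v : Fin n, Nat.log 2 n < (DeltaOn n E v).card) →
      (∀ v : Fin n, ∀ Q ⊆ DeltaOn n E v, Q.card = Nat.log 2 n →
        (1 / 2 - 1 / 10 ^ 6 : ℝ) * n < ((DeltaSetOn n E Q).card : ℝ)) →
      (∀ x y : Fin n, x ≠ y → NadjOn n E x y →
        ∀ Qx ⊆ DeltaOn n E x, ∀ Qy ⊆ DeltaOn n E y,
          Qx.card = Nat.log 2 n → Qy.card = Nat.log 2 n →
          ((DeltaSetOn n E Qx ∩ DeltaSetOn n E Qy).card : ℝ) < (n : ℝ) / 100) →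
      ¬ ∃ v : Fin 9 → Fin n, Function.Injective v ∧
          ∀ i : Fin 9, NadjOn n E (v i) (v (i + 1)) := by
  refine ⟨0, fun n _ E _ _ hΔ hlarge hsparse => ?_⟩
  rintro ⟨v, -, hpin⟩
  choose Q hQsub hQcard using fun i => exists_subset_card_eq (hΔ (v i)).le
  set A : Fin 9 → Finset (Fin n) := fun i => DeltaSetOn n E (Q i)
  have hstep (i : Fin 9) : (#(A i ∆ (A (i + 1))ᶜ) : ℝ) < (2 / 10 ^ 6 + 2 / 100) * n := by
    have hX := hlarge _ _ (hQsub i) (hQcard i)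
    have hY := hlarge _ _ (hQsub (i + 1)) (hQcard (i + 1))
    have hXY := hsparse _ _ (hpin i).1 (hpin i) _ (hQsub i) _ (hQsub (i + 1)) (hQcard i)
      (hQcard (i + 1))
    have key := card_symmDiff_compl_lt_of_inter_lt (X := A i) (Y := A (i + 1))
      (ε := 1 / 10 ^ 6) (δ := 1 / 100)
    rw [Fintype.card_fin] at key
    linarith [key hX hY (by linarith)]
  have hsum : (∑ i, #(A i ∆ (A (i + 1))ᶜ) : ℝ) < 9 * ((2 / 10 ^ 6 + 2 / 100) * n) := by
    simpa using sum_lt_sum_of_nonempty univ_nonempty fun i _ => hstep i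
  have hcycle := card_le_sum_card_symmDiff_compl_of_odd (by decide) A
  rw [Fintype.card_fin] at hcycle
  have hcycleR : (n : ℝ) ≤ ∑ i, (#(A i ∆ (A (i + 1))ᶜ) : ℝ) := by exact_mod_cast hcycle
  linarith
end

section
/- Let Γ be an I₃-free digraph containing no pinwheel on 5 vertices, and let x, y be distinct vertices with x ≁ y. Then Δ(Δ(x)) ∩ Δ(Δ(y)) = ∅, and moreover Δ(Δ(x)) induces a tournament (any two distinct elements of Δ(Δ(x)) are joined by an arrow). -/
/-- `E` is a digraph relation: irreflexive and asymmetric. -/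
def IsDigraph {V : Type*} (E : V → V → Prop) : Prop :=
  (∀ x, ¬ E x x) ∧ ∀ x y, E x y → ¬ E y x

/-- `E` is I₃-free: any three distinct vertices span at least one arrow. -/
def I3Free {V : Type*} (E : V → V → Prop) : Prop :=
  ∀ x y z : V, x ≠ y → y ≠ z → x ≠ z →
    E x y ∨ E y x ∨ E y z ∨ E z y ∨ E x z ∨ E z x

/-- `x ≁ y`: distinct and unrelated in either direction. -/
def Nadj {V : Type*} (E : V → V → Prop) (x y : V) : Prop :=
  x ≠ y ∧ ¬ E x y ∧ ¬ E y x

/-- `Δ(v) = {x : x ≁ v}`. -/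
def Delta {V : Type*} (E : V → V → Prop) (v : V) : Set V :=
  {x | Nadj E x v}

/-- `Δ(Q) = (⋃_{v ∈ Q} Δ(v)) \ Q`. -/
def DeltaSet {V : Type*} (E : V → V → Prop) (Q : Set V) : Set V :=
  (⋃ v ∈ Q, Delta E v) \ Q

/-- The set `S` induces a tournament. -/
def IndTourn {V : Type*} (E : V → V → Prop) (S : Set V) : Prop :=
  ∀ x ∈ S, ∀ y ∈ S, x ≠ y → E x y ∨ E y x

/-!
A closed walk of length five along non-arrows either visits five distinct vertices, which is a
pinwheel, or revisits a vertex two steps later, which leaves three pairwise non-adjacent vertices.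
So in an I₃-free digraph without 5-pinwheels no such walk exists. A vertex in both
`Δ(Δ(x))` and `Δ(Δ(y))` closes the walk `z ≁ u ≁ x ≁ y ≁ w ≁ z`, and two non-adjacent
vertices `a ≁ b` of `Δ(Δ(x))` close the walk `x ≁ u ≁ a ≁ b ≁ w ≁ x`.
-/

section

variable {V : Type*} {E : V → V → Prop}

theorem Nadj.symm {a b : V} (h : Nadj E a b) : Nadj E b a :=
  ⟨h.1.symm, h.2.2, h.2.1⟩

theorem exists_nadj_of_mem_deltaSet_delta {x z : V} (hz : z ∈ DeltaSet E (Delta E x)) :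
    ∃ u, Nadj E u x ∧ Nadj E z u := by
  obtain ⟨hz, -⟩ := hz
  simpa only [Set.mem_iUnion, exists_prop, Delta, Set.mem_ofPred_eq] using hz

theorem I3Free.not_nadj_triangle (hf : I3Free E) {a b c : V}
    (hab : Nadj E a b) (hbc : Nadj E b c) (hac : Nadj E a c) : False := by
  rcases hf a b c hab.1 hbc.1 hac.1 with h | h | h | h | h | h
  exacts [hab.2.1 h, hab.2.2 h, hbc.2.1 h, hbc.2.2 h, hac.2.1 h, hac.2.2 h]

theorem I3Free.not_closed_nadj_walk_five (hf : I3Free E)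
    (hC5 : ¬ ∃ v : Fin 5 → V, Function.Injective v ∧ ∀ i, Nadj E (v i) (v (i + 1)))
    (c : Fin 5 → V) (hc : ∀ i, Nadj E (c i) (c (i + 1))) : False := by
  have step_one : ∀ m, c m ≠ c (m + 1) := fun m => (hc m).1
  have step_two : ∀ m, c m ≠ c (m + 2) := fun m hm => by
    have hback := (hc (m + 4)).symm
    rw [show m + 4 + 1 = m by simp [add_assoc], hm] at hback
    exact hf.not_nadj_triangle (hc (m + 2)) (by simpa [add_assoc] using hc (m + 3)) hback
  refine hC5 ⟨c, fun i j hij => ?_, hc⟩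
  obtain ⟨k, rfl⟩ : ∃ k, j = i + k := ⟨j - i, by abel⟩
  fin_cases k
  · simp
  · exact absurd hij (step_one i)
  · exact absurd hij (step_two i)
  · exact absurd hij.symm (by simpa [add_assoc] using step_two (i + 3))
  · exact absurd hij.symm (by simpa [add_assoc] using step_one (i + 4))

theorem I3Free.not_nadj_pentagon (hf : I3Free E)
    (hC5 : ¬ ∃ v : Fin 5 → V, Function.Injective v ∧ ∀ i, Nadj E (v i) (v (i + 1)))
    {a b c d e : V} (hab : Nadj E a b) (hbc : Nadj E b c) (hcd : Nadj E c d)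
    (hde : Nadj E d e) (hea : Nadj E e a) : False :=
  hf.not_closed_nadj_walk_five hC5 ![a, b, c, d, e] fun i => by
    fin_cases i
    exacts [hab, hbc, hcd, hde, hea]

end

theorem deltaSet_disjoint_and_tournament_general {V : Type*} (E : V → V → Prop)
    (hf : I3Free E)
    (hC5 : ¬ ∃ v : Fin 5 → V, Function.Injective v ∧ ∀ i, Nadj E (v i) (v (i + 1)))
    (x y : V) (h : Nadj E x y) :
    DeltaSet E (Delta E x) ∩ DeltaSet E (Delta E y) = ∅ ∧
      IndTourn E (DeltaSet E (Delta E x)) := by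
  constructor
  · refine Set.eq_empty_of_forall_notMem fun z ⟨hzx, hzy⟩ => ?_
    obtain ⟨u, hux, hzu⟩ := exists_nadj_of_mem_deltaSet_delta hzx
    obtain ⟨w, hwy, hzw⟩ := exists_nadj_of_mem_deltaSet_delta hzy
    exact hf.not_nadj_pentagon hC5 hzu hux h hwy.symm hzw.symm
  · intro a ha b hb hab
    by_contra hnot
    obtain ⟨u, hux, hau⟩ := exists_nadj_of_mem_deltaSet_delta ha
    obtain ⟨w, hwx, hbw⟩ := exists_nadj_of_mem_deltaSet_delta hb
    exact hf.not_nadj_pentagon hC5 hux.symm hau.symm ⟨hab, not_or.mp hnot⟩ hbw hwx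

/-- In an I₃-free digraph with no pinwheel on 5 vertices, if `x ≁ y` then
`Δ(Δ(x)) ∩ Δ(Δ(y)) = ∅` and `Δ(Δ(x))` induces a tournament. -/
theorem deltaSet_disjoint_and_tournament {V : Type*} (E : V → V → Prop)
    (hd : IsDigraph E) (hf : I3Free E)
    (hC5 : ¬ ∃ v : Fin 5 → V, Function.Injective v ∧ ∀ i, Nadj E (v i) (v (i + 1)))
    (x y : V) (hxy : x ≠ y) (h : Nadj E x y) :
    DeltaSet E (Delta E x) ∩ DeltaSet E (Delta E y) = ∅ ∧
      IndTourn E (DeltaSet E (Delta E x)) :=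
  deltaSet_disjoint_and_tournament_general E hf hC5 x y h
end
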